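/- Let |Φ⟩ be a paired state (t = 2), let 1 ≤ u < v ≤ n, and let z⃗ := ⊕_{u<a<v} Φ_a ∈ 𝔽₂^4. Then: (i) cr(S_{uv}|Φ⟩) − cr(|Φ⟩) ≡ (Φ_u ⊕ z⃗) ⊙ (Φ_v ⊕ z⃗) (mod 2); (ii) if Φ_u = I_{00} and Φ_v = I_{11}, then cr(|Φ⟩) ≡ z_1 + z_2 + cr(F^{{1,2}}_{uv}|Φ⟩) ≡ z_1 + z_3 + cr(F^{{1,3}}_{uv}|Φ⟩) ≡ z_2 + z_3 + cr(F^{{2,3}}_{uv}|Φ⟩) (mod 2). -/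

import Mathlib

open MeasureTheory Matrix Finset Filter

noncomputable section

namespace DUCC

attribute [local instance] Classical.propDecidable

/-- The space of `n`-qubit operators: `2^n × 2^n` complex matrices, indexed by
bit strings `Fin n → Fin 2`. -/
abbrev QMat (n : ℕ) := Matrix (Fin n → Fin 2) (Fin n → Fin 2) ℂ

/-- The space of `n`-qubit states. -/
abbrev QVec (n : ℕ) := (Fin n → Fin 2) → ℂ

/-- The 2×2 matrix `Q = |0⟩⟨1|`. -/
def Qmat : Matrix (Fin 2) (Fin 2) ℂ := fun i j => if i = 0 ∧ j = 1 then 1 else 0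

/-- `Q† = |1⟩⟨0|`. -/
def Qd : Matrix (Fin 2) (Fin 2) ℂ := Qmatᴴ

/-- Embed a single-qubit operator `M` at qubit `p` (i.e. `M_p = I ⊗ ⋯ ⊗ M ⊗ ⋯ ⊗ I`). -/
def embed (n : ℕ) (M : Matrix (Fin 2) (Fin 2) ℂ) (p : Fin n) : QMat n :=
  fun x y => (if ∀ a, a ≠ p → x a = y a then 1 else 0) * M (x p) (y p)

/-- A string of Pauli-`Z` operators over the index set `S`. -/
def Zstr (n : ℕ) (S : Finset (Fin n)) : QMat n :=
  Matrix.diagonal fun x => ∏ a ∈ S, (if x a = 1 then (-1 : ℂ) else 1)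

/-- The Jordan–Wigner annihilation operator `â_p = Q_p ∏_{a<p} Z_a`. -/
def aop (n : ℕ) (p : Fin n) : QMat n :=
  Zstr n (Finset.univ.filter fun a => a < p) * embed n Qmat p

/-- Ordered product of finitely many matrices (or monoid elements). -/
def finProd {α : Type*} [Monoid α] (r : ℕ) (f : Fin r → α) : α :=
  ((List.finRange r).map f).prod

/-- The qubit excitation operator `Q_{c 1}† ⋯ Q_{c r}† Q_{d 1} ⋯ Q_{d r}`. -/
def qubitExc (n r : ℕ) (c d : Fin r → Fin n) : QMat n :=
  finProd r (fun i => embed n Qd (c i)) * finProd r (fun i => embed n Qmat (d i))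

/-- The fermionic excitation operator `â_{c 1}† ⋯ â_{c r}† â_{d 1} ⋯ â_{d r}`. -/
def fermExc (n r : ℕ) (c d : Fin r → Fin n) : QMat n :=
  finProd r (fun i => (aop n (c i))ᴴ) * finProd r (fun i => aop n (d i))

/-- The rotation `R(θ) = exp (θ (τ - τ†))` generated by an operator `τ`. -/
def excRot {n : ℕ} (τ : QMat n) (θ : ℝ) : QMat n :=
  NormedSpace.exp ((θ : ℂ) • (τ - τᴴ))

/-- `τ` is a (qubit or fermionic) excitation operator. -/
def IsExcitationOp {n : ℕ} (τ : QMat n) : Prop :=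
  ∃ (r : ℕ) (c : Fin r → Fin n) (d : Fin r → Fin n), 0 < r ∧
    Function.Injective (Sum.elim c d) ∧
    (τ = qubitExc n r c d ∨ τ = fermExc n r c d)

/-- `R` is a (qubit) excitation rotation. -/
def IsExcRotation {n : ℕ} (R : ℝ → QMat n) : Prop :=
  ∃ τ : QMat n, IsExcitationOp τ ∧ ∀ θ, R θ = excRot τ θ

/-- The Hartree–Fock state `|1…10…0⟩` with `η` electrons. -/
def psi0 (n η : ℕ) : QVec n :=
  fun x => if ∀ i : Fin n, (x i = 1 ↔ (i : ℕ) < η) then 1 else 0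

/-- The rank-one projector `|v⟩⟨v|`. -/
def ketbra {n : ℕ} (v : QVec n) : QMat n := fun x y => v x * star (v y)

/-- The alternated dUCC ansatz `U^R⃗_k(θ⃗) = ∏_{i=1}^k ∏_{j=1}^m R_j(θ_j^{(i)})`. -/
def ansatz {n : ℕ} (m k : ℕ) (R : Fin m → ℝ → QMat n) (θ : Fin k × Fin m → ℝ) : QMat n :=
  finProd k (fun i => finProd m (fun j => R j (θ (i, j))))

/-- The cost function `C(θ⃗; O) = tr (O U(θ⃗) |ψ₀⟩⟨ψ₀| U(θ⃗)†)`. -/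
def costFn {n : ℕ} (η m k : ℕ) (R : Fin m → ℝ → QMat n) (O : QMat n)
    (θ : Fin k × Fin m → ℝ) : ℝ :=
  (O * ansatz m k R θ * ketbra (psi0 n η) * (ansatz m k R θ)ᴴ).trace.re

/-- Expectation of `f` with `θ⃗` uniform on `[0, 2π)^ι`. -/
def uExp {ι : Type*} [Fintype ι] (f : (ι → ℝ) → ℝ) : ℝ :=
  (1 / (2 * Real.pi)) ^ (Fintype.card ι) *
    ∫ θ in Set.pi Set.univ fun _ : ι => Set.Ico (0 : ℝ) (2 * Real.pi), f θ

/-- Variance of `f` with `θ⃗` uniform on `[0, 2π)^ι`. -/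
def uVar {ι : Type*} [Fintype ι] (f : (ι → ℝ) → ℝ) : ℝ :=
  uExp (fun θ => (f θ - uExp f) ^ 2)

/-- The partial derivative of `f` in the coordinate `x`. -/
def pderiv {ι : Type*} (f : (ι → ℝ) → ℝ) (x : ι) (θ : ι → ℝ) : ℝ :=
  deriv (fun s => f (Function.update θ x s)) (θ x)

/-- `(â_p† â_q + h.c.)`. -/
def singleHerm (n : ℕ) (p q : Fin n) : QMat n :=
  (aop n p)ᴴ * aop n q + ((aop n p)ᴴ * aop n q)ᴴ

/-- `(â_p† â_q† â_r â_s + h.c.)`. -/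
def doubleHerm (n : ℕ) (p q r s : Fin n) : QMat n :=
  (aop n p)ᴴ * (aop n q)ᴴ * aop n r * aop n s +
    ((aop n p)ᴴ * (aop n q)ᴴ * aop n r * aop n s)ᴴ

/-- The electronic structure Hamiltonian. -/
def Hel (n : ℕ) (h : Fin n → Fin n → ℝ) (g : Fin n → Fin n → Fin n → Fin n → ℝ) : QMat n :=
  (∑ p : Fin n, ∑ q : Fin n, if q < p then (h p q : ℂ) • singleHerm n p q else 0) +
  ∑ p : Fin n, ∑ q : Fin n, ∑ r : Fin n, ∑ s : Fin n,
    if s < r ∧ r < q ∧ q < p then (g p q r s : ℂ) • doubleHerm n p q r s else 0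

/-! ### The enlarged space of `2t` replicas -/

/-- Matrices on the `2t`-fold replicated space `(ℂ^{2^n})^{⊗2t}`. -/
abbrev BigMat (n t : ℕ) := Matrix (Fin (2*t) → Fin n → Fin 2) (Fin (2*t) → Fin n → Fin 2) ℂ

/-- Vectors on the `2t`-fold replicated space. -/
abbrev BigVec (n t : ℕ) := (Fin (2*t) → Fin n → Fin 2) → ℂ

/-- `A^{⊗t} ⊗ conj(A)^{⊗t}`. -/
def momentKron {n : ℕ} (t : ℕ) (A : QMat n) : BigMat n t :=
  fun x y => ∏ j : Fin (2*t), if (j : ℕ) < t then A (x j) (y j) else star (A (x j) (y j))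

/-- The `t`-th moment superoperator `⟨R⟩_t = (1/2π) ∫₀^{2π} R(θ)^{⊗t} ⊗ conj(R(θ))^{⊗t} dθ`. -/
def momentSOp {n : ℕ} (t : ℕ) (R : ℝ → QMat n) : BigMat n t :=
  fun x y => (1 / (2 * Real.pi) : ℂ) *
    ∫ θ in Set.Ico (0 : ℝ) (2 * Real.pi), momentKron t (R θ) x y

/-- `|ψ₀⟩^{⊗2t}`. -/
def psi0pow (n η t : ℕ) : BigVec n t := fun x => ∏ j : Fin (2*t), psi0 n η (x j)

/-- The `(R⃗,t,k)`-moment vector `|Ψ^R⃗_{t,k}⟩ = (∏_j ⟨R_j⟩_t)^k |ψ₀⟩^{⊗2t}`. -/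
def momentVec {n : ℕ} (t m : ℕ) (R : Fin m → ℝ → QMat n) (η k : ℕ) : BigVec n t :=
  ((finProd m fun j => momentSOp t (R j)) ^ k).mulVec (psi0pow n η t)

/-- A site (all `2t` replicas of qubit `i`) has even Hamming weight everywhere. -/
def evenState {n t : ℕ} (x : Fin (2*t) → Fin n → Fin 2) : Prop :=
  ∀ i : Fin n, Even (Finset.univ.filter fun j : Fin (2*t) => x j i = 1).card

/-- Membership in `H^even_t`: the span of the computational basis states in which
every site has even Hamming weight. -/
def memHeven {n t : ℕ} (v : BigVec n t) : Prop := ∀ x, ¬ evenState x → v x = 0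

/-- `Z_p^{⊗2t}`: Pauli-`Z` on qubit `p` in each of the `2t` replicas. -/
def ZpPow {n : ℕ} (t : ℕ) (p : Fin n) : BigMat n t :=
  Matrix.diagonal fun x => ∏ j : Fin (2*t), (if x j p = 1 then (-1 : ℂ) else 1)

/-- The unitary permuting the `2t` replicas according to `σ`. -/
def replicaPerm {n t : ℕ} (σ : Equiv.Perm (Fin (2*t))) : BigMat n t :=
  fun x y => if ∀ j, x j = y (σ j) then 1 else 0

/-- The unitary permuting the `n` sites according to `π`. -/
def sitePermOp {n t : ℕ} (π : Equiv.Perm (Fin n)) : BigMat n t :=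
  fun x y => if ∀ j i, x j (π i) = y j i then 1 else 0

/-- The computational basis vector `|Φ⟩` of the replicated space. -/
def basisVec {n t : ℕ} (x : Fin (2*t) → Fin n → Fin 2) : BigVec n t :=
  fun y => if y = x then 1 else 0

/-! ### Single and double (qubit) excitation rotations -/

/-- `T = Q_p† Q_q`. -/
def singleT (n : ℕ) (p q : Fin n) : QMat n := embed n Qd p * embed n Qmat q

/-- `T = Q_p† Q_q† Q_r Q_s`. -/
def doubleT (n : ℕ) (p q r s : Fin n) : QMat n :=
  embed n Qd p * embed n Qd q * embed n Qmat r * embed n Qmat s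

/-- The open interval `(q, p)` of qubit indices. -/
def Zioo (n : ℕ) (q p : Fin n) : Finset (Fin n) :=
  Finset.univ.filter fun a => q < a ∧ a < p

/-- The qubit single excitation rotation `A^qubit_{pq}(θ)`. -/
def AqubitRot (n : ℕ) (p q : Fin n) (θ : ℝ) : QMat n :=
  NormedSpace.exp ((θ : ℂ) • (singleT n p q - (singleT n p q)ᴴ))

/-- The single excitation rotation `A_{pq}(θ)`. -/
def ARot (n : ℕ) (p q : Fin n) (θ : ℝ) : QMat n :=
  NormedSpace.exp ((θ : ℂ) • ((singleT n p q - (singleT n p q)ᴴ) * Zstr n (Zioo n q p)))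

/-- The qubit double excitation rotation `B^qubit_{pqrs}(θ)`. -/
def BqubitRot (n : ℕ) (p q r s : Fin n) (θ : ℝ) : QMat n :=
  NormedSpace.exp ((θ : ℂ) • (doubleT n p q r s - (doubleT n p q r s)ᴴ))

/-- The double excitation rotation `B_{pqrs}(θ)`. -/
def BRot (n : ℕ) (p q r s : Fin n) (θ : ℝ) : QMat n :=
  NormedSpace.exp ((θ : ℂ) •
    ((doubleT n p q r s - (doubleT n p q r s)ᴴ) * Zstr n (Zioo n s r ∪ Zioo n q p)))

/-! ### Paired states at `t = 2` -/

/-- Site `i` of `x` is in state `|I_{ab}⟩ = |a,a,b,b⟩`. -/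
def siteIsI {n : ℕ} (x : Fin (2*2) → Fin n → Fin 2) (i : Fin n) (a b : Fin 2) : Prop :=
  x ⟨0, by omega⟩ i = a ∧ x ⟨1, by omega⟩ i = a ∧ x ⟨2, by omega⟩ i = b ∧ x ⟨3, by omega⟩ i = b

/-- Site `i` of `x` is in state `|X_{ab}⟩ = |a,ā,b,b̄⟩`. -/
def siteIsX {n : ℕ} (x : Fin (2*2) → Fin n → Fin 2) (i : Fin n) (a b : Fin 2) : Prop :=
  x ⟨0, by omega⟩ i = a ∧ x ⟨1, by omega⟩ i = a + 1 ∧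
  x ⟨2, by omega⟩ i = b ∧ x ⟨3, by omega⟩ i = b + 1

/-- Number of sites of `x` in state `|I_{ab}⟩`. -/
def nI {n : ℕ} (x : Fin (2*2) → Fin n → Fin 2) (a b : Fin 2) : ℕ :=
  (Finset.univ.filter fun i : Fin n => siteIsI x i a b).card

/-- Number of sites of `x` in state `|X_{ab}⟩`. -/
def nX {n : ℕ} (x : Fin (2*2) → Fin n → Fin 2) (a b : Fin 2) : ℕ :=
  (Finset.univ.filter fun i : Fin n => siteIsX x i a b).card

/-- `x` is a paired state (with `η` electrons). -/
def pairedState {n : ℕ} (η : ℕ) (x : Fin (2*2) → Fin n → Fin 2) : Prop :=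
  (∀ i : Fin n, (∃ a b, siteIsI x i a b) ∨ (∃ a b, siteIsX x i a b)) ∧
  nI x 0 1 = nI x 1 0 ∧ nX x 0 0 = nX x 1 1 ∧ nX x 0 1 = nX x 1 0 ∧
  (nI x 0 0 : ℤ) - (nI x 1 1 : ℤ) = (n : ℤ) - 2 * (η : ℤ)

/-- Membership in `H^paired_2`: the span of all paired states. -/
def memPaired {n : ℕ} (η : ℕ) (v : (Fin (2*2) → Fin n → Fin 2) → ℂ) : Prop :=
  ∀ x, ¬ pairedState η x → v x = 0

/-- The color of site `i`: `some 0` (red) for `I_{01},I_{10}`, `some 1` (green) for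
`X_{00},X_{11}`, `some 2` (blue) for `X_{01},X_{10}`, `none` for `I_{00},I_{11}`. -/
def siteColor {n : ℕ} (x : Fin (2*2) → Fin n → Fin 2) (i : Fin n) : Option (Fin 3) :=
  if siteIsI x i 0 1 ∨ siteIsI x i 1 0 then some 0
  else if siteIsX x i 0 0 ∨ siteIsX x i 1 1 then some 1
  else if siteIsX x i 0 1 ∨ siteIsX x i 1 0 then some 2
  else none

/-- The crossing number of a paired state. -/
def crossNum {n : ℕ} (x : Fin (2*2) → Fin n → Fin 2) : ℕ :=
  (Finset.univ.filter fun q : Fin n × Fin n × Fin n × Fin n =>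
    q.1 < q.2.1 ∧ q.2.1 < q.2.2.1 ∧ q.2.2.1 < q.2.2.2 ∧
    siteColor x q.1 ≠ siteColor x q.2.1 ∧
    siteColor x q.1 = siteColor x q.2.2.1 ∧ siteColor x q.1 ≠ none ∧
    siteColor x q.2.1 = siteColor x q.2.2.2 ∧ siteColor x q.2.1 ≠ none).card

/-- Swap sites `u` and `v`. -/
def swapSites {n t : ℕ} (u v : Fin n) (x : Fin (2*t) → Fin n → Fin 2) :
    Fin (2*t) → Fin n → Fin 2 :=
  fun j i => x j (Equiv.swap u v i)

/-- Flip the bits in positions `W` of sites `u` and `v`. -/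
def flipSites {n t : ℕ} (u v : Fin n) (W : Finset (Fin (2*t)))
    (x : Fin (2*t) → Fin n → Fin 2) : Fin (2*t) → Fin n → Fin 2 :=
  fun j i => if (i = u ∨ i = v) ∧ j ∈ W then x j i + 1 else x j i

/-- `z⃗ = ⊕_{u<a<v} Φ_a`, the XOR of the site strings strictly between `u` and `v`. -/
def zIoo {n t : ℕ} (u v : Fin n) (x : Fin (2*t) → Fin n → Fin 2) : Fin (2*t) → Fin 2 :=
  fun j => ∑ a ∈ Finset.univ.filter (fun a : Fin n => u < a ∧ a < v), x j a

/-- `a ⊙ b = Σ_j a_j b_j` as a natural number. -/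
def bitDot {t : ℕ} (a b : Fin (2*t) → Fin 2) : ℕ := ∑ j, ((a j : ℕ) * (b j : ℕ))



namespace CRaux

variable {n : ℕ}

abbrev Col := Option (Fin 3)

/-- indicator of a proposition in `ZMod 2` -/
def ind (P : Prop) : ZMod 2 := if P then 1 else 0

lemma ind_congr {P Q : Prop} (h : P ↔ Q) : ind P = ind Q := by
  by_cases hP : P
  · rw [ind, if_pos hP, ind, if_pos (h.mp hP)]
  · rw [ind, if_neg hP, ind, if_neg (fun hQ => hP (h.mpr hQ))]

lemma ind_true {P : Prop} (h : P) : ind P = 1 := if_pos h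
lemma ind_false {P : Prop} (h : ¬ P) : ind P = 0 := if_neg h

lemma ind_mul (P Q : Prop) : ind P * ind Q = ind (P ∧ Q) := by
  by_cases hP : P <;> by_cases hQ : Q <;> simp [ind, hP, hQ]

lemma ind_split (P Q : Prop) : ind P = ind (P ∧ Q) + ind (P ∧ ¬ Q) := by
  by_cases hP : P <;> by_cases hQ : Q <;> simp [ind, hP, hQ]

lemma ind_split4 (P A B : Prop) :
    ind P = ind (P ∧ A ∧ B) + ind (P ∧ A ∧ ¬ B) + ind (P ∧ ¬ A ∧ B) + ind (P ∧ ¬ A ∧ ¬ B) := by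
  by_cases hP : P <;> by_cases hA : A <;> by_cases hB : B <;> simp [ind, hP, hA, hB]

lemma ind_or3 {P Q R S : Prop} (hpq : ¬ (P ∧ Q)) (hpr : ¬ (P ∧ R)) (hqr : ¬ (Q ∧ R)) :
    ind ((P ∨ Q ∨ R) ∧ S) = ind (P ∧ S) + ind (Q ∧ S) + ind (R ∧ S) := by
  by_cases hP : P <;> by_cases hQ : Q <;> by_cases hR : R <;> by_cases hS : S <;>
    simp [ind, hP, hQ, hR, hS] <;> tauto

lemma z2_self : ∀ t : ZMod 2, t + t = 0 := by decide
lemma z2_sub : ∀ t s : ZMod 2, t - s = t + s := by decide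


abbrev Quad (n : ℕ) := Fin n × Fin n × Fin n × Fin n

def srt (q : Quad n) : Prop := q.1 < q.2.1 ∧ q.2.1 < q.2.2.1 ∧ q.2.2.1 < q.2.2.2

def pat (c : Fin n → Col) (q : Quad n) : Prop :=
  c q.1 ≠ c q.2.1 ∧ c q.1 = c q.2.2.1 ∧ c q.1 ≠ none ∧
  c q.2.1 = c q.2.2.2 ∧ c q.2.1 ≠ none

noncomputable def acr (c : Fin n → Col) : ZMod 2 := ∑ q : Quad n, ind (srt q ∧ pat c q)

/-- the symplectic form on colors -/
def ww : Col → Col → ZMod 2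
  | some a, some b => if a = b then 0 else 1
  | _, _ => 0

lemma ww_symm : ∀ γ δ : Col, ww γ δ = ww δ γ := by decide

/-- coordinatewise action of a permutation on quadruples -/
def eqv (s : Equiv.Perm (Fin n)) : Quad n ≃ Quad n :=
  s.prodCongr (s.prodCongr (s.prodCongr s))

lemma eqv_apply (s : Equiv.Perm (Fin n)) (q : Quad n) :
    eqv s q = (s q.1, s q.2.1, s q.2.2.1, s q.2.2.2) := rfl

section Adjacent

variable (a b : Fin n)

/-- `a` occurs among the coordinates of `q` -/
def inco (a : Fin n) (q : Quad n) : Prop :=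
  q.1 = a ∨ q.2.1 = a ∨ q.2.2.1 = a ∨ q.2.2.2 = a

lemma swap_val (x : Fin n) :
    ((Equiv.swap a b x : Fin n) : ℕ) =
      if x = a then (b : ℕ) else if x = b then (a : ℕ) else (x : ℕ) := by
  rw [Equiv.swap_apply_def]; split_ifs <;> rfl

variable (hab : (a : ℕ) + 1 = (b : ℕ))
include hab

lemma swap_lt_iff {x y : Fin n} (h : (x ≠ a ∧ y ≠ a) ∨ (x ≠ b ∧ y ≠ b)) :
    Equiv.swap a b x < Equiv.swap a b y ↔ x < y := by
  rw [Fin.lt_def, Fin.lt_def, swap_val, swap_val]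
  split_ifs <;> simp_all [Fin.ext_iff] <;> omega

lemma srt_eqv_swap {q : Quad n} (h : ¬ (inco a q ∧ inco b q)) :
    srt (eqv (Equiv.swap a b) q) ↔ srt q := by
  have key : ∀ x y : Fin n, inco x q → inco y q →
      (Equiv.swap a b x < Equiv.swap a b y ↔ x < y) := by
    intro x y hx hy
    refine swap_lt_iff a b hab ?_
    rcases not_and_or.mp h with h | h
    · exact Or.inl ⟨fun e => h (e ▸ hx), fun e => h (e ▸ hy)⟩
    · exact Or.inr ⟨fun e => h (e ▸ hx), fun e => h (e ▸ hy)⟩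
  rw [srt, srt, eqv_apply]
  rw [key _ _ (Or.inl rfl) (Or.inr (Or.inl rfl)),
    key _ _ (Or.inr (Or.inl rfl)) (Or.inr (Or.inr (Or.inl rfl))),
    key _ _ (Or.inr (Or.inr (Or.inl rfl))) (Or.inr (Or.inr (Or.inr rfl)))]

/-- sorted quadruples containing both `a` and `b = a+1` have them in consecutive slots -/
lemma shape_decomp {q : Quad n} :
    (srt q ∧ inco a q ∧ inco b q) ↔
      ((q.1 = a ∧ q.2.1 = b ∧ b < q.2.2.1 ∧ q.2.2.1 < q.2.2.2) ∨
       (q.2.1 = a ∧ q.2.2.1 = b ∧ q.1 < a ∧ b < q.2.2.2) ∨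
       (q.2.2.1 = a ∧ q.2.2.2 = b ∧ q.1 < q.2.1 ∧ q.2.1 < a)) := by
  obtain ⟨q1, q2, q3, q4⟩ := q
  simp only [srt, inco, Fin.lt_def, Fin.ext_iff]
  omega

end Adjacent


lemma ww_none_left (γ : Col) : ww none γ = 0 := by cases γ <;> rfl
lemma ww_none_right (γ : Col) : ww γ none = 0 := by cases γ <;> rfl
lemma ww_self (γ : Col) : ww γ γ = 0 := by cases γ <;> simp [ww]

lemma quad_sum (F : Quad n → ZMod 2) :
    ∑ q : Quad n, F q =
      ∑ x1 : Fin n, ∑ x2 : Fin n, ∑ x3 : Fin n, ∑ x4 : Fin n, F (x1, x2, x3, x4) := by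
  rw [Fintype.sum_prod_type]
  exact Finset.sum_congr rfl fun x1 _ => by
    rw [Fintype.sum_prod_type]
    exact Finset.sum_congr rfl fun x2 _ => by rw [Fintype.sum_prod_type]

section Teval

variable (a b : Fin n)

lemma T1_eval (P : Fin n → Fin n → Prop) (G : Quad n → Prop) :
    (∑ q : Quad n, ind ((q.1 = a ∧ q.2.1 = b ∧ P q.2.2.1 q.2.2.2) ∧ G q)) =
      ∑ x : Fin n, ∑ y : Fin n, ind (P x y ∧ G (a, b, x, y)) := by
  rw [quad_sum]
  rw [Fintype.sum_eq_single a (fun x1 hx1 => Finset.sum_eq_zero fun x2 _ =>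
    Finset.sum_eq_zero fun x3 _ => Finset.sum_eq_zero fun x4 _ =>
      ind_false (fun h => hx1 h.1.1))]
  rw [Fintype.sum_eq_single b (fun x2 hx2 => Finset.sum_eq_zero fun x3 _ =>
    Finset.sum_eq_zero fun x4 _ => ind_false (fun h => hx2 h.1.2.1))]
  exact Finset.sum_congr rfl fun x _ => Finset.sum_congr rfl fun y _ =>
    ind_congr (by tauto)

lemma T2_eval (P : Fin n → Fin n → Prop) (G : Quad n → Prop) :
    (∑ q : Quad n, ind ((q.2.1 = a ∧ q.2.2.1 = b ∧ P q.1 q.2.2.2) ∧ G q)) =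
      ∑ x : Fin n, ∑ y : Fin n, ind (P x y ∧ G (x, a, b, y)) := by
  rw [quad_sum]
  refine Finset.sum_congr rfl fun x _ => ?_
  rw [Fintype.sum_eq_single a (fun x2 hx2 => Finset.sum_eq_zero fun x3 _ =>
    Finset.sum_eq_zero fun x4 _ => ind_false (fun h => hx2 h.1.1))]
  rw [Fintype.sum_eq_single b (fun x3 hx3 => Finset.sum_eq_zero fun x4 _ =>
    ind_false (fun h => hx3 h.1.2.1))]
  exact Finset.sum_congr rfl fun y _ => ind_congr (by tauto)

lemma T3_eval (P : Fin n → Fin n → Prop) (G : Quad n → Prop) :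
    (∑ q : Quad n, ind ((q.2.2.1 = a ∧ q.2.2.2 = b ∧ P q.1 q.2.1) ∧ G q)) =
      ∑ x : Fin n, ∑ y : Fin n, ind (P x y ∧ G (x, y, a, b)) := by
  rw [quad_sum]
  refine Finset.sum_congr rfl fun x _ => Finset.sum_congr rfl fun y _ => ?_
  rw [Fintype.sum_eq_single a (fun x3 hx3 => Finset.sum_eq_zero fun x4 _ =>
    ind_false (fun h => hx3 h.1.1))]
  rw [Fintype.sum_eq_single b (fun x4 hx4 => ind_false (fun h => hx4 h.1.2.1))]
  exact ind_congr (by tauto)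

end Teval


lemma ind_triangle (x y t : Fin n) (P Q : Prop) (hne : P → Q → x ≠ y) :
    ind ((t < x ∧ x < y) ∧ P ∧ Q) + ind ((t < y ∧ y < x) ∧ Q ∧ P) =
      ind ((t < x ∧ P) ∧ (t < y ∧ Q)) := by
  by_cases hP : P
  · by_cases hQ : Q
    · have hxy := hne hP hQ
      by_cases h1 : t < x
      · by_cases h2 : t < y
        · rcases lt_or_gt_of_ne hxy with h | h
          · rw [ind_true ⟨⟨h1, h⟩, hP, hQ⟩, ind_false (fun hc => absurd h (not_lt.mpr hc.1.2.le)),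
              ind_true ⟨⟨h1, hP⟩, ⟨h2, hQ⟩⟩, add_zero]
          · rw [ind_false (fun hc => absurd h (not_lt.mpr hc.1.2.le)), ind_true ⟨⟨h2, h⟩, hQ, hP⟩,
              ind_true ⟨⟨h1, hP⟩, ⟨h2, hQ⟩⟩, zero_add]
        · rw [ind_false (fun hc => h2 (h1.trans hc.1.2)), ind_false (fun hc => h2 hc.1.1),
            ind_false (fun hc => h2 hc.2.1), add_zero]
      · rw [ind_false (fun hc => h1 hc.1.1), ind_false (fun hc => h1 (hc.1.1.trans hc.1.2)),
          ind_false (fun hc => h1 hc.1.1), add_zero]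
    · rw [ind_false (fun hc => hQ hc.2.2), ind_false (fun hc => hQ hc.2.1),
        ind_false (fun hc => hQ hc.2.2), add_zero]
  · rw [ind_false (fun hc => hP hc.2.1), ind_false (fun hc => hP hc.2.2),
      ind_false (fun hc => hP hc.1.2), add_zero]

lemma ind_rect (x y : Fin n) (A B P Q : Prop) :
    ind ((A ∧ B) ∧ P ∧ Q) = ind ((A ∧ P) ∧ (B ∧ Q)) := ind_congr (by tauto)

lemma sum_sum_ind_mul (f g : Fin n → Prop) :
    (∑ x : Fin n, ∑ y : Fin n, ind ((f x) ∧ (g y))) =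
      (∑ x : Fin n, ind (f x)) * (∑ y : Fin n, ind (g y)) := by
  rw [Finset.sum_mul_sum]
  exact Finset.sum_congr rfl fun x _ => Finset.sum_congr rfl fun y _ => (ind_mul _ _).symm

lemma z2_solve : ∀ X Y : ZMod 2, X + 1 + 0 + Y = 0 → X + Y = 1 := by decide


lemma ind_triangle_up (x y t : Fin n) (P Q : Prop) (hne : P → Q → x ≠ y) :
    ind ((x < y ∧ y < t) ∧ P ∧ Q) + ind ((y < x ∧ x < t) ∧ Q ∧ P) =
      ind ((x < t ∧ P) ∧ (y < t ∧ Q)) := by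
  by_cases hP : P
  · by_cases hQ : Q
    · have hxy := hne hP hQ
      by_cases h1 : x < t
      · by_cases h2 : y < t
        · rcases lt_or_gt_of_ne hxy with h | h
          · rw [ind_true ⟨⟨h, h2⟩, hP, hQ⟩, ind_false (fun hc => absurd h (not_lt.mpr hc.1.1.le)),
              ind_true ⟨⟨h1, hP⟩, ⟨h2, hQ⟩⟩, add_zero]
          · rw [ind_false (fun hc => absurd h (not_lt.mpr hc.1.1.le)), ind_true ⟨⟨h, h1⟩, hQ, hP⟩,
              ind_true ⟨⟨h1, hP⟩, ⟨h2, hQ⟩⟩, zero_add]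
        · rw [ind_false (fun hc => h2 hc.1.2), ind_false (fun hc => h2 (hc.1.1.trans hc.1.2)),
            ind_false (fun hc => h2 hc.2.1), add_zero]
      · rw [ind_false (fun hc => h1 (hc.1.1.trans hc.1.2)), ind_false (fun hc => h1 hc.1.2),
          ind_false (fun hc => h1 hc.1.1), add_zero]
    · rw [ind_false (fun hc => hQ hc.2.2), ind_false (fun hc => hQ hc.2.1),
        ind_false (fun hc => hQ hc.2.2), add_zero]
  · rw [ind_false (fun hc => hP hc.2.1), ind_false (fun hc => hP hc.2.2),
      ind_false (fun hc => hP hc.1.2), add_zero]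

lemma count_split (c : Fin n → Col) (a b : Fin n) (hab : (a : ℕ) + 1 = (b : ℕ)) (γ : Col) :
    ∑ x : Fin n, ind (c x = γ) =
      (∑ x : Fin n, ind (x < a ∧ c x = γ)) + ind (c a = γ) + ind (c b = γ) +
        ∑ x : Fin n, ind (b < x ∧ c x = γ) := by
  have key : ∀ x : Fin n, ind (c x = γ) =
      ind (x < a ∧ c x = γ) + ind (x = a ∧ c x = γ) + ind (x = b ∧ c x = γ) +
        ind (b < x ∧ c x = γ) := by
    intro x
    by_cases hc : c x = γ
    · simp only [ind, hc, eq_self_iff_true, and_true, Fin.lt_def, Fin.ext_iff]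
      split_ifs <;> first | decide | (exfalso; omega)
    · simp [ind, hc]
  calc ∑ x : Fin n, ind (c x = γ)
      = ∑ x : Fin n, (ind (x < a ∧ c x = γ) + ind (x = a ∧ c x = γ) + ind (x = b ∧ c x = γ) +
          ind (b < x ∧ c x = γ)) := Finset.sum_congr rfl fun x _ => key x
    _ = ((∑ x : Fin n, (ind (x < a ∧ c x = γ) + ind (x = a ∧ c x = γ) + ind (x = b ∧ c x = γ))) +
          ∑ x : Fin n, ind (b < x ∧ c x = γ)) := Finset.sum_add_distrib
    _ = (((∑ x : Fin n, (ind (x < a ∧ c x = γ) + ind (x = a ∧ c x = γ))) +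
          ∑ x : Fin n, ind (x = b ∧ c x = γ)) + ∑ x : Fin n, ind (b < x ∧ c x = γ)) := by
        rw [Finset.sum_add_distrib]
    _ = (∑ x : Fin n, ind (x < a ∧ c x = γ)) + ind (c a = γ) + ind (c b = γ) +
          ∑ x : Fin n, ind (b < x ∧ c x = γ) := by
        rw [Finset.sum_add_distrib]
        rw [Fintype.sum_eq_single (f := fun x => ind (x = a ∧ c x = γ)) a
          (fun x hx => ind_false (fun h => hx h.1))]
        rw [Fintype.sum_eq_single (f := fun x => ind (x = b ∧ c x = γ)) b
          (fun x hx => ind_false (fun h => hx h.1))]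
        rw [ind_congr (show (a = a ∧ c a = γ) ↔ c a = γ by tauto),
          ind_congr (show (b = b ∧ c b = γ) ↔ c b = γ by tauto)]

lemma z2_solve' : ∀ X Y : ZMod 2, X + 0 + 1 + Y = 0 → X + Y = 1 := by decide
lemma z2_final : ∀ E E' R W : ZMod 2, E + E' = W → E' + R = (E + R) + W := by decide
lemma ww_ne : ∀ γ δ : Col, γ ≠ none → δ ≠ none → γ ≠ δ → ww γ δ = 1 := by decide


lemma z2_wrap : ∀ S1 S1' S3 S3' L1 L2 G1 G2 R : ZMod 2,
    S1 + S1' = G1 * G2 → S3 + S3' = L1 * L2 → L1 + G1 = 1 → L2 + G2 = 1 →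
    S1' + L1 * G2 + S3' + R = (S1 + L2 * G1 + S3 + R) + 1 := by decide

lemma acr_adj_swap (c : Fin n → Col) (a b : Fin n)
    (hev : ∀ γ : Col, γ ≠ none → ∑ i : Fin n, ind (c i = γ) = 0)
    (hab : (a : ℕ) + 1 = (b : ℕ)) :
    acr (c ∘ Equiv.swap a b) = acr c + ww (c a) (c b) := by
  have hne_ab : a ≠ b := fun e => by rw [e] at hab; omega
  have hlt_ab : a < b := Fin.lt_def.mpr (by omega)
  set s : Equiv.Perm (Fin n) := Equiv.swap a b with hs
  have hsa : s a = b := Equiv.swap_apply_left a b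
  have hsb : s b = a := Equiv.swap_apply_right a b
  have hso : ∀ x : Fin n, x ≠ a → x ≠ b → s x = x := fun x h1 h2 =>
    Equiv.swap_apply_of_ne_of_ne h1 h2
  have hss : ∀ x : Fin n, s (s x) = x := fun x => Equiv.swap_apply_self a b x
  -- step 1 : reindex
  have hcc : ∀ x : Fin n, (c ∘ s) (s x) = c x := fun x => by
    simp only [Function.comp_apply, hss]
  have step1 : acr (c ∘ s) = ∑ q : Quad n, ind (srt (eqv s q) ∧ pat c q) := by
    rw [acr, ← Equiv.sum_comp (eqv s) (fun q => ind (srt q ∧ pat (c ∘ s) q))]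
    refine Finset.sum_congr rfl fun q _ => ind_congr (and_congr Iff.rfl (iff_of_eq ?_))
    show pat (c ∘ s) (eqv s q) = pat c q
    simp only [pat, eqv_apply, hcc]
  -- split by whether both a and b occur
  have hBOTH : ∀ g : Quad n → Prop, (∑ q : Quad n, ind (g q)) =
      (∑ q : Quad n, ind (g q ∧ (inco a q ∧ inco b q))) +
        ∑ q : Quad n, ind (g q ∧ ¬ (inco a q ∧ inco b q)) := fun g => by
    rw [← Finset.sum_add_distrib]
    exact Finset.sum_congr rfl fun q _ => ind_split _ _
  have e1 : acr (c ∘ s) =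
      (∑ q : Quad n, ind ((srt (eqv s q) ∧ pat c q) ∧ (inco a q ∧ inco b q))) +
        ∑ q : Quad n, ind ((srt q ∧ pat c q) ∧ ¬ (inco a q ∧ inco b q)) := by
    rw [step1, hBOTH (fun q => srt (eqv s q) ∧ pat c q)]
    congr 1
    refine Finset.sum_congr rfl fun q _ => ind_congr ?_
    constructor
    · rintro ⟨⟨h1, h2⟩, h3⟩; exact ⟨⟨(srt_eqv_swap a b hab h3).mp h1, h2⟩, h3⟩
    · rintro ⟨⟨h1, h2⟩, h3⟩; exact ⟨⟨(srt_eqv_swap a b hab h3).mpr h1, h2⟩, h3⟩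
  have e2 : acr c =
      (∑ q : Quad n, ind ((srt q ∧ pat c q) ∧ (inco a q ∧ inco b q))) +
        ∑ q : Quad n, ind ((srt q ∧ pat c q) ∧ ¬ (inco a q ∧ inco b q)) :=
    hBOTH (fun q => srt q ∧ pat c q)
  -- E' reindex
  have hincoa : ∀ q : Quad n, inco a (eqv s q) ↔ inco b q := by
    intro q
    have h : ∀ x : Fin n, s x = a ↔ x = b := fun x => by
      constructor
      · intro h; have := congrArg s h; rwa [hss, hsa] at this
      · rintro rfl; exact hsb
    simp only [inco, eqv_apply, h]
  have hincob : ∀ q : Quad n, inco b (eqv s q) ↔ inco a q := by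
    intro q
    have h : ∀ x : Fin n, s x = b ↔ x = a := fun x => by
      constructor
      · intro h; have := congrArg s h; rwa [hss, hsb] at this
      · rintro rfl; exact hsa
    simp only [inco, eqv_apply, h]
  have e3 : (∑ q : Quad n, ind ((srt (eqv s q) ∧ pat c q) ∧ (inco a q ∧ inco b q))) =
      ∑ q : Quad n, ind ((srt q ∧ pat (c ∘ s) q) ∧ (inco a q ∧ inco b q)) := by
    rw [← Equiv.sum_comp (eqv s)
      (fun q => ind ((srt (eqv s q) ∧ pat c q) ∧ (inco a q ∧ inco b q)))]
    refine Finset.sum_congr rfl fun q _ => ind_congr ?_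
    have h1 : eqv s (eqv s q) = q := by
      obtain ⟨q1, q2, q3, q4⟩ := q
      simp [eqv_apply, hss]
    rw [h1]
    have h2 : pat c (eqv s q) = pat (c ∘ s) q := rfl
    rw [h2, hincoa, hincob]
    tauto
  -- shape decomposition
  have eshape : ∀ d : Fin n → Col,
      (∑ q : Quad n, ind ((srt q ∧ pat d q) ∧ (inco a q ∧ inco b q))) =
      (∑ q : Quad n, ind ((q.1 = a ∧ q.2.1 = b ∧ (b < q.2.2.1 ∧ q.2.2.1 < q.2.2.2)) ∧ pat d q)) +
      (∑ q : Quad n, ind ((q.2.1 = a ∧ q.2.2.1 = b ∧ (q.1 < a ∧ b < q.2.2.2)) ∧ pat d q)) +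
      (∑ q : Quad n, ind ((q.2.2.1 = a ∧ q.2.2.2 = b ∧ (q.1 < q.2.1 ∧ q.2.1 < a)) ∧ pat d q)) := by
    intro d
    rw [← Finset.sum_add_distrib, ← Finset.sum_add_distrib]
    refine Finset.sum_congr rfl fun q _ => ?_
    have hiff : ((srt q ∧ pat d q) ∧ (inco a q ∧ inco b q)) ↔
        (((q.1 = a ∧ q.2.1 = b ∧ (b < q.2.2.1 ∧ q.2.2.1 < q.2.2.2)) ∨
          (q.2.1 = a ∧ q.2.2.1 = b ∧ (q.1 < a ∧ b < q.2.2.2)) ∨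
          (q.2.2.1 = a ∧ q.2.2.2 = b ∧ (q.1 < q.2.1 ∧ q.2.1 < a))) ∧ pat d q) := by
      rw [← shape_decomp a b hab]
      tauto
    rw [ind_congr hiff, ind_or3]
    · rintro ⟨h1, h2⟩; exact hne_ab (h2.1.symm.trans h1.2.1)
    · rintro ⟨h1, h2⟩; rw [h1.1] at h2; exact absurd (h2.2.2.1.trans h2.2.2.2) (lt_irrefl _)
    · rintro ⟨h1, h2⟩; exact hne_ab (h2.1.symm.trans h1.2.1)
  -- rewrite everything
  rw [e1, e3, e2, eshape c, eshape (c ∘ s),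
    T1_eval a b (fun x y => b < x ∧ x < y) (pat c),
    T2_eval a b (fun x y => x < a ∧ b < y) (pat c),
    T3_eval a b (fun x y => x < y ∧ y < a) (pat c),
    T1_eval a b (fun x y => b < x ∧ x < y) (pat (c ∘ s)),
    T2_eval a b (fun x y => x < a ∧ b < y) (pat (c ∘ s)),
    T3_eval a b (fun x y => x < y ∧ y < a) (pat (c ∘ s))]
  by_cases hdeg : c a = none ∨ c b = none ∨ c a = c b
  · -- degenerate case: everything vanishes
    have hstop : ¬ (c a ≠ c b ∧ c a ≠ none ∧ c b ≠ none) := by tauto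
    have f1 : ∀ (d : Fin n → Col) (x y : Fin n), pat d (a, b, x, y) →
        d a ≠ d b ∧ d a ≠ none ∧ d b ≠ none := fun d x y h =>
      ⟨h.1, h.2.2.1, h.2.2.2.2⟩
    have f2 : ∀ (d : Fin n → Col) (x y : Fin n), pat d (x, a, b, y) →
        d a ≠ d b ∧ d a ≠ none ∧ d b ≠ none := fun d x y h =>
      ⟨fun e => h.1 (h.2.1.trans e.symm), h.2.2.2.2, fun e => h.2.2.1 (h.2.1.trans e)⟩
    have f3 : ∀ (d : Fin n → Col) (x y : Fin n), pat d (x, y, a, b) →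
        d a ≠ d b ∧ d a ≠ none ∧ d b ≠ none := fun d x y h =>
      ⟨fun e => h.1 (h.2.1.trans (e.trans h.2.2.2.1.symm)),
        fun e => h.2.2.1 (h.2.1.trans e), fun e => h.2.2.2.2 (h.2.2.2.1.trans e)⟩
    have fs : (c ∘ s) a ≠ (c ∘ s) b ∧ (c ∘ s) a ≠ none ∧ (c ∘ s) b ≠ none →
        c a ≠ c b ∧ c a ≠ none ∧ c b ≠ none := by
      simp only [Function.comp_apply, hsa, hsb]
      exact fun h => ⟨fun e => h.1 e.symm, h.2.2, h.2.1⟩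
    have z1 : (∑ x : Fin n, ∑ y : Fin n, ind ((b < x ∧ x < y) ∧ pat c (a, b, x, y))) = 0 :=
      Finset.sum_eq_zero fun x _ => Finset.sum_eq_zero fun y _ =>
        ind_false fun h => hstop (f1 c x y h.2)
    have z2 : (∑ x : Fin n, ∑ y : Fin n, ind ((x < a ∧ b < y) ∧ pat c (x, a, b, y))) = 0 :=
      Finset.sum_eq_zero fun x _ => Finset.sum_eq_zero fun y _ =>
        ind_false fun h => hstop (f2 c x y h.2)
    have z3 : (∑ x : Fin n, ∑ y : Fin n, ind ((x < y ∧ y < a) ∧ pat c (x, y, a, b))) = 0 :=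
      Finset.sum_eq_zero fun x _ => Finset.sum_eq_zero fun y _ =>
        ind_false fun h => hstop (f3 c x y h.2)
    have z4 : (∑ x : Fin n, ∑ y : Fin n, ind ((b < x ∧ x < y) ∧ pat (c ∘ s) (a, b, x, y))) = 0 :=
      Finset.sum_eq_zero fun x _ => Finset.sum_eq_zero fun y _ =>
        ind_false fun h => hstop (fs (f1 (c ∘ s) x y h.2))
    have z5 : (∑ x : Fin n, ∑ y : Fin n, ind ((x < a ∧ b < y) ∧ pat (c ∘ s) (x, a, b, y))) = 0 :=
      Finset.sum_eq_zero fun x _ => Finset.sum_eq_zero fun y _ =>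
        ind_false fun h => hstop (fs (f2 (c ∘ s) x y h.2))
    have z6 : (∑ x : Fin n, ∑ y : Fin n, ind ((x < y ∧ y < a) ∧ pat (c ∘ s) (x, y, a, b))) = 0 :=
      Finset.sum_eq_zero fun x _ => Finset.sum_eq_zero fun y _ =>
        ind_false fun h => hstop (fs (f3 (c ∘ s) x y h.2))
    have hww : ww (c a) (c b) = 0 := by
      rcases hdeg with h | h | h
      · rw [h, ww_none_left]
      · rw [h, ww_none_right]
      · rw [h, ww_self]
    rw [z1, z2, z3, z4, z5, z6, hww]
    ring
  · push_neg at hdeg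
    obtain ⟨hca, hcb, hne⟩ := hdeg
    have hpat_conv : ∀ u1 u2 u3 u4 : Fin n, pat (c ∘ s) (u1, u2, u3, u4) ↔
        (c (s u1) ≠ c (s u2) ∧ c (s u1) = c (s u3) ∧ c (s u1) ≠ none ∧
          c (s u2) = c (s u4) ∧ c (s u2) ≠ none) := fun _ _ _ _ => Iff.rfl
    -- simplify the six sums
    have hA1 : (∑ x : Fin n, ∑ y : Fin n, ind ((b < x ∧ x < y) ∧ pat c (a, b, x, y))) =
        ∑ x : Fin n, ∑ y : Fin n, ind ((b < x ∧ x < y) ∧ (c x = c a ∧ c y = c b)) := by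
      refine Finset.sum_congr rfl fun x _ => Finset.sum_congr rfl fun y _ => ind_congr ?_
      constructor
      · rintro ⟨ho, hp⟩; exact ⟨ho, hp.2.1.symm, hp.2.2.2.1.symm⟩
      · rintro ⟨ho, h1, h2⟩; exact ⟨ho, hne, h1.symm, hca, h2.symm, hcb⟩
    have hA2 : (∑ x : Fin n, ∑ y : Fin n, ind ((x < a ∧ b < y) ∧ pat c (x, a, b, y))) =
        ∑ x : Fin n, ∑ y : Fin n, ind ((x < a ∧ c x = c b) ∧ (b < y ∧ c y = c a)) := by
      refine Finset.sum_congr rfl fun x _ => Finset.sum_congr rfl fun y _ => ind_congr ?_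
      constructor
      · rintro ⟨⟨h1, h2⟩, hp⟩; exact ⟨⟨h1, hp.2.1⟩, h2, hp.2.2.2.1.symm⟩
      · rintro ⟨⟨h1, h2⟩, h3, h4⟩
        exact ⟨⟨h1, h3⟩, fun e => hne (e.symm.trans h2), h2, fun e => hcb (h2.symm.trans e),
          h4.symm, hca⟩
    have hA3 : (∑ x : Fin n, ∑ y : Fin n, ind ((x < y ∧ y < a) ∧ pat c (x, y, a, b))) =
        ∑ x : Fin n, ∑ y : Fin n, ind ((x < y ∧ y < a) ∧ (c x = c a ∧ c y = c b)) := by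
      refine Finset.sum_congr rfl fun x _ => Finset.sum_congr rfl fun y _ => ind_congr ?_
      constructor
      · rintro ⟨ho, hp⟩; exact ⟨ho, hp.2.1, hp.2.2.2.1⟩
      · rintro ⟨ho, h1, h2⟩
        exact ⟨ho, fun e => hne ((h1.symm.trans e).trans h2), h1,
          fun e => hca (h1.symm.trans e), h2, fun e => hcb (h2.symm.trans e)⟩
    have hA1' : (∑ x : Fin n, ∑ y : Fin n, ind ((b < x ∧ x < y) ∧ pat (c ∘ s) (a, b, x, y))) =
        ∑ x : Fin n, ∑ y : Fin n, ind ((b < x ∧ x < y) ∧ (c x = c b ∧ c y = c a)) := by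
      refine Finset.sum_congr rfl fun x _ => Finset.sum_congr rfl fun y _ => ind_congr ?_
      constructor
      · rintro ⟨⟨hx, hy⟩, hp⟩
        have hxv := Fin.lt_def.mp hx
        have hyv := Fin.lt_def.mp (hx.trans hy)
        have hxa : x ≠ a := fun e => by rw [Fin.ext_iff] at e; omega
        have hxb : x ≠ b := fun e => by rw [Fin.ext_iff] at e; omega
        have hya : y ≠ a := fun e => by rw [Fin.ext_iff] at e; omega
        have hyb : y ≠ b := fun e => by rw [Fin.ext_iff] at e; omega
        rw [hpat_conv, hsa, hsb, hso x hxa hxb, hso y hya hyb] at hp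
        exact ⟨⟨hx, hy⟩, hp.2.1.symm, hp.2.2.2.1.symm⟩
      · rintro ⟨⟨hx, hy⟩, h1, h2⟩
        have hxv := Fin.lt_def.mp hx
        have hyv := Fin.lt_def.mp (hx.trans hy)
        have hxa : x ≠ a := fun e => by rw [Fin.ext_iff] at e; omega
        have hxb : x ≠ b := fun e => by rw [Fin.ext_iff] at e; omega
        have hya : y ≠ a := fun e => by rw [Fin.ext_iff] at e; omega
        have hyb : y ≠ b := fun e => by rw [Fin.ext_iff] at e; omega
        refine ⟨⟨hx, hy⟩, ?_⟩
        rw [hpat_conv, hsa, hsb, hso x hxa hxb, hso y hya hyb]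
        exact ⟨Ne.symm hne, h1.symm, hcb, h2.symm, hca⟩
    have hA2' : (∑ x : Fin n, ∑ y : Fin n, ind ((x < a ∧ b < y) ∧ pat (c ∘ s) (x, a, b, y))) =
        ∑ x : Fin n, ∑ y : Fin n, ind ((x < a ∧ c x = c a) ∧ (b < y ∧ c y = c b)) := by
      refine Finset.sum_congr rfl fun x _ => Finset.sum_congr rfl fun y _ => ind_congr ?_
      constructor
      · rintro ⟨⟨hx, hy⟩, hp⟩
        have hxv := Fin.lt_def.mp hx
        have hyv := Fin.lt_def.mp hy
        have hxa : x ≠ a := fun e => by rw [Fin.ext_iff] at e; omega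
        have hxb : x ≠ b := fun e => by rw [Fin.ext_iff] at e; omega
        have hya : y ≠ a := fun e => by rw [Fin.ext_iff] at e; omega
        have hyb : y ≠ b := fun e => by rw [Fin.ext_iff] at e; omega
        rw [hpat_conv, hsa, hsb, hso x hxa hxb, hso y hya hyb] at hp
        exact ⟨⟨hx, hp.2.1⟩, hy, hp.2.2.2.1.symm⟩
      · rintro ⟨⟨hx, h1⟩, hy, h2⟩
        have hxv := Fin.lt_def.mp hx
        have hyv := Fin.lt_def.mp hy
        have hxa : x ≠ a := fun e => by rw [Fin.ext_iff] at e; omega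
        have hxb : x ≠ b := fun e => by rw [Fin.ext_iff] at e; omega
        have hya : y ≠ a := fun e => by rw [Fin.ext_iff] at e; omega
        have hyb : y ≠ b := fun e => by rw [Fin.ext_iff] at e; omega
        refine ⟨⟨hx, hy⟩, ?_⟩
        rw [hpat_conv, hsa, hsb, hso x hxa hxb, hso y hya hyb]
        exact ⟨fun e => hne (h1.symm.trans e), h1, fun e => hca (h1.symm.trans e),
          h2.symm, hcb⟩
    have hA3' : (∑ x : Fin n, ∑ y : Fin n, ind ((x < y ∧ y < a) ∧ pat (c ∘ s) (x, y, a, b))) =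
        ∑ x : Fin n, ∑ y : Fin n, ind ((x < y ∧ y < a) ∧ (c x = c b ∧ c y = c a)) := by
      refine Finset.sum_congr rfl fun x _ => Finset.sum_congr rfl fun y _ => ind_congr ?_
      constructor
      · rintro ⟨⟨hx, hy⟩, hp⟩
        have hxv := Fin.lt_def.mp (hx.trans hy)
        have hyv := Fin.lt_def.mp hy
        have hxa : x ≠ a := fun e => by rw [Fin.ext_iff] at e; omega
        have hxb : x ≠ b := fun e => by rw [Fin.ext_iff] at e; omega
        have hya : y ≠ a := fun e => by rw [Fin.ext_iff] at e; omega
        have hyb : y ≠ b := fun e => by rw [Fin.ext_iff] at e; omega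
        rw [hpat_conv, hsa, hsb, hso x hxa hxb, hso y hya hyb] at hp
        exact ⟨⟨hx, hy⟩, hp.2.1, hp.2.2.2.1⟩
      · rintro ⟨⟨hx, hy⟩, h1, h2⟩
        have hxv := Fin.lt_def.mp (hx.trans hy)
        have hyv := Fin.lt_def.mp hy
        have hxa : x ≠ a := fun e => by rw [Fin.ext_iff] at e; omega
        have hxb : x ≠ b := fun e => by rw [Fin.ext_iff] at e; omega
        have hya : y ≠ a := fun e => by rw [Fin.ext_iff] at e; omega
        have hyb : y ≠ b := fun e => by rw [Fin.ext_iff] at e; omega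
        refine ⟨⟨hx, hy⟩, ?_⟩
        rw [hpat_conv, hsa, hsb, hso x hxa hxb, hso y hya hyb]
        exact ⟨fun e => hne ((h2.symm.trans e.symm).trans h1), h1,
          fun e => hcb (h1.symm.trans e), h2, fun e => hca (h2.symm.trans e)⟩
    rw [hA1, hA2, hA3, hA1', hA2', hA3']
    -- combine
    have comb1 : (∑ x : Fin n, ∑ y : Fin n, ind ((b < x ∧ x < y) ∧ (c x = c a ∧ c y = c b))) +
        (∑ x : Fin n, ∑ y : Fin n, ind ((b < x ∧ x < y) ∧ (c x = c b ∧ c y = c a))) =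
        (∑ x : Fin n, ind (b < x ∧ c x = c a)) * (∑ y : Fin n, ind (b < y ∧ c y = c b)) := by
      rw [show (∑ x : Fin n, ∑ y : Fin n, ind ((b < x ∧ x < y) ∧ (c x = c b ∧ c y = c a))) =
          ∑ x : Fin n, ∑ y : Fin n, ind ((b < y ∧ y < x) ∧ (c y = c b ∧ c x = c a)) from
        Finset.sum_comm]
      rw [← Finset.sum_add_distrib, ← sum_sum_ind_mul]
      refine Finset.sum_congr rfl fun x _ => ?_
      rw [← Finset.sum_add_distrib]
      refine Finset.sum_congr rfl fun y _ => ?_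
      exact ind_triangle x y b _ _ (fun hP hQ e => by subst e; exact hne (hP.symm.trans hQ))
    have comb3 : (∑ x : Fin n, ∑ y : Fin n, ind ((x < y ∧ y < a) ∧ (c x = c a ∧ c y = c b))) +
        (∑ x : Fin n, ∑ y : Fin n, ind ((x < y ∧ y < a) ∧ (c x = c b ∧ c y = c a))) =
        (∑ x : Fin n, ind (x < a ∧ c x = c a)) * (∑ y : Fin n, ind (y < a ∧ c y = c b)) := by
      rw [show (∑ x : Fin n, ∑ y : Fin n, ind ((x < y ∧ y < a) ∧ (c x = c b ∧ c y = c a))) =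
          ∑ x : Fin n, ∑ y : Fin n, ind ((y < x ∧ x < a) ∧ (c y = c b ∧ c x = c a)) from
        Finset.sum_comm]
      rw [← Finset.sum_add_distrib, ← sum_sum_ind_mul]
      refine Finset.sum_congr rfl fun x _ => ?_
      rw [← Finset.sum_add_distrib]
      refine Finset.sum_congr rfl fun y _ => ?_
      exact ind_triangle_up x y a _ _ (fun hP hQ e => by subst e; exact hne (hP.symm.trans hQ))
    have comb2 : (∑ x : Fin n, ∑ y : Fin n, ind ((x < a ∧ c x = c b) ∧ (b < y ∧ c y = c a))) =
        (∑ x : Fin n, ind (x < a ∧ c x = c b)) * (∑ y : Fin n, ind (b < y ∧ c y = c a)) :=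
      sum_sum_ind_mul _ _
    have comb2' : (∑ x : Fin n, ∑ y : Fin n, ind ((x < a ∧ c x = c a) ∧ (b < y ∧ c y = c b))) =
        (∑ x : Fin n, ind (x < a ∧ c x = c a)) * (∑ y : Fin n, ind (b < y ∧ c y = c b)) :=
      sum_sum_ind_mul _ _
    rw [comb2, comb2']
    -- parities
    have hL1G1 : (∑ x : Fin n, ind (x < a ∧ c x = c a)) +
        (∑ x : Fin n, ind (b < x ∧ c x = c a)) = 1 := by
      have e := hev (c a) hca
      rw [count_split c a b hab (c a)] at e
      rw [ind_true (rfl : c a = c a), ind_false (show ¬ (c b = c a) from fun h => hne h.symm)]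
        at e
      exact z2_solve _ _ e
    have hL2G2 : (∑ x : Fin n, ind (x < a ∧ c x = c b)) +
        (∑ x : Fin n, ind (b < x ∧ c x = c b)) = 1 := by
      have e := hev (c b) hcb
      rw [count_split c a b hab (c b)] at e
      rw [ind_false hne, ind_true (rfl : c b = c b)] at e
      exact z2_solve' _ _ e
    rw [ww_ne (c a) (c b) hca hcb hne]
    exact z2_wrap _ _ _ _ _ _ _ _ _ comb1 comb3 hL1G1 hL2G2





lemma hev_comp (c : Fin n → Col) (σ : Equiv.Perm (Fin n))
    (hev : ∀ γ : Col, γ ≠ none → ∑ i : Fin n, ind (c i = γ) = 0) :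
    ∀ γ : Col, γ ≠ none → ∑ i : Fin n, ind ((c ∘ σ) i = γ) = 0 := fun γ hγ => by
  rw [show (∑ i : Fin n, ind ((c ∘ σ) i = γ)) = ∑ i : Fin n, ind (c i = γ) from
    Equiv.sum_comp σ (fun i => ind (c i = γ))]
  exact hev γ hγ

lemma acr_gen_swap (k : ℕ) : ∀ (c : Fin n → Col) (u v : Fin n),
    (∀ γ : Col, γ ≠ none → ∑ i : Fin n, ind (c i = γ) = 0) →
    (v : ℕ) = (u : ℕ) + 1 + k →
    acr (c ∘ Equiv.swap u v) = acr c +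
      ((∑ w ∈ Finset.univ.filter fun w : Fin n => u < w ∧ w < v,
        (ww (c u) (c w) + ww (c v) (c w))) + ww (c u) (c v)) := by
  induction k with
  | zero =>
    intro c u v hev hv
    have hset : (Finset.univ.filter fun w : Fin n => u < w ∧ w < v) = ∅ := by
      apply Finset.filter_false_of_mem
      intro w _
      rw [Fin.lt_def, Fin.lt_def]
      omega
    rw [hset, Finset.sum_empty, zero_add, acr_adj_swap c u v hev (by omega)]
  | succ k ih =>
    intro c u v hev hv
    have hw0 : (u : ℕ) + 1 < n := by omega
    set w0 : Fin n := ⟨(u : ℕ) + 1, by omega⟩ with hw0def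
    have hvw0 : (v : ℕ) = (w0 : ℕ) + 1 + k := by simp [hw0def]; omega
    have huw0 : u ≠ w0 := by rw [Fin.ne_iff_vne]; simp [hw0def]
    have hvu : v ≠ u := by rw [Fin.ne_iff_vne]; omega
    have hvw : v ≠ w0 := by rw [Fin.ne_iff_vne]; simp [hw0def]; omega
    have h1 : acr (c ∘ Equiv.swap u w0) = acr c + ww (c u) (c w0) :=
      acr_adj_swap c u w0 hev (by simp [hw0def])
    have hev1 := hev_comp c (Equiv.swap u w0) hev
    have h2 := ih (c ∘ Equiv.swap u w0) w0 v hev1 hvw0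
    have hev2 := hev_comp _ (Equiv.swap w0 v) hev1
    have h3 : acr (((c ∘ Equiv.swap u w0) ∘ Equiv.swap w0 v) ∘ Equiv.swap u w0) =
        acr ((c ∘ Equiv.swap u w0) ∘ Equiv.swap w0 v) +
          ww (((c ∘ Equiv.swap u w0) ∘ Equiv.swap w0 v) u)
            (((c ∘ Equiv.swap u w0) ∘ Equiv.swap w0 v) w0) :=
      acr_adj_swap _ u w0 hev2 (by simp [hw0def])
    -- composite permutation identity
    have hperm : Equiv.swap u w0 * Equiv.swap w0 v * Equiv.swap u w0 = Equiv.swap u v := by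
      have := Equiv.swap_mul_swap_mul_swap (x := v) (y := w0) (z := u) hvw hvu
      rwa [Equiv.swap_comm w0 u, Equiv.swap_comm v w0] at this
    have hfun : ((c ∘ Equiv.swap u w0) ∘ Equiv.swap w0 v) ∘ Equiv.swap u w0 =
        c ∘ Equiv.swap u v := by
      funext i
      simp only [Function.comp_apply]
      rw [← hperm]
      rfl
    -- colors
    have hc1w0 : (c ∘ Equiv.swap u w0) w0 = c u := by
      simp only [Function.comp_apply, Equiv.swap_apply_right]
    have hc1v : (c ∘ Equiv.swap u w0) v = c v := by
      simp only [Function.comp_apply, Equiv.swap_apply_of_ne_of_ne hvu hvw]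
    have hc2u : ((c ∘ Equiv.swap u w0) ∘ Equiv.swap w0 v) u = c w0 := by
      simp only [Function.comp_apply,
        Equiv.swap_apply_of_ne_of_ne huw0 (fun e => hvu e.symm),
        Equiv.swap_apply_left]
    have hc2w0 : ((c ∘ Equiv.swap u w0) ∘ Equiv.swap w0 v) w0 = c v := by
      simp only [Function.comp_apply, Equiv.swap_apply_left]
      exact hc1v
    rw [hfun] at h3
    rw [h3, h2, h1, hc2u, hc2w0, hc1w0, hc1v]
    -- sum over the middle interval
    have hsum : (∑ w ∈ Finset.univ.filter fun w : Fin n => w0 < w ∧ w < v,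
          (ww (c u) ((c ∘ Equiv.swap u w0) w) + ww (c v) ((c ∘ Equiv.swap u w0) w))) =
        ∑ w ∈ Finset.univ.filter fun w : Fin n => w0 < w ∧ w < v,
          (ww (c u) (c w) + ww (c v) (c w)) := by
      refine Finset.sum_congr rfl fun w hw => ?_
      rw [Finset.mem_filter] at hw
      obtain ⟨-, hw1, hw2⟩ := hw
      have hwu : w ≠ u := by
        rw [Fin.ne_iff_vne]
        have := Fin.lt_def.mp hw1
        simp only [hw0def] at this ⊢
        omega
      have hww0 : w ≠ w0 := Ne.symm (ne_of_lt hw1)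
      rw [show (c ∘ Equiv.swap u w0) w = c w from by
        simp only [Function.comp_apply, Equiv.swap_apply_of_ne_of_ne hwu hww0]]
    rw [hsum]
    have hset : (Finset.univ.filter fun w : Fin n => u < w ∧ w < v) =
        insert w0 (Finset.univ.filter fun w : Fin n => w0 < w ∧ w < v) := by
      ext w
      simp only [Finset.mem_insert, Finset.mem_filter, Finset.mem_univ, true_and,
        Fin.lt_def, Fin.ext_iff, hw0def]
      omega
    have hnotmem : w0 ∉ (Finset.univ.filter fun w : Fin n => w0 < w ∧ w < v) := by
      simp [Finset.mem_filter]
    rw [hset, Finset.sum_insert hnotmem, ww_symm (c w0) (c v)]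
    ring


lemma z2_dup : ∀ p q : ZMod 2, p = q + (p + q) := by decide
lemma z2_flip : ∀ X N : ZMod 2, 0 + X + X + N = 0 + 0 + 0 + N := by decide

lemma hev_update2 (c : Fin n → Col) (a b : Fin n) (hne : a ≠ b) (h : c a = c b) (γ : Col)
    (hev : ∀ δ : Col, δ ≠ none → ∑ i : Fin n, ind (c i = δ) = 0) :
    ∀ δ : Col, δ ≠ none →
      ∑ i : Fin n, ind ((Function.update (Function.update c a γ) b γ) i = δ) = 0 := by
  intro δ hδ
  set c2 := Function.update (Function.update c a γ) b γ with hc2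
  have hc2a : c2 a = γ := by rw [hc2, Function.update_of_ne hne, Function.update_self]
  have hc2b : c2 b = γ := by rw [hc2, Function.update_self]
  have hc2o : ∀ x, x ≠ a → x ≠ b → c2 x = c x := fun x h1 h2 => by
    rw [hc2, Function.update_of_ne h2, Function.update_of_ne h1]
  have key : ∀ i, ind (c2 i = δ) = ind (c i = δ) +
      ((if i = a then (ind (γ = δ) + ind (c a = δ)) else 0) +
        if i = b then (ind (γ = δ) + ind (c a = δ)) else 0) := by
    intro i
    rcases eq_or_ne i a with rfl | hia
    · rw [hc2a, if_pos rfl, if_neg hne, add_zero]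
      exact z2_dup _ _
    · rcases eq_or_ne i b with rfl | hib
      · rw [hc2b, if_neg hia, if_pos rfl, zero_add]
        rw [show (c i = δ) ↔ (c a = δ) from by rw [h]]
        exact z2_dup _ _
      · rw [hc2o i hia hib, if_neg hia, if_neg hib, add_zero, add_zero]
  calc ∑ i : Fin n, ind (c2 i = δ)
      = ∑ i : Fin n, (ind (c i = δ) +
          ((if i = a then (ind (γ = δ) + ind (c a = δ)) else 0) +
            if i = b then (ind (γ = δ) + ind (c a = δ)) else 0)) :=
        Finset.sum_congr rfl fun i _ => key i
    _ = (∑ i : Fin n, ind (c i = δ)) +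
          ((∑ i : Fin n, if i = a then (ind (γ = δ) + ind (c a = δ)) else 0) +
            ∑ i : Fin n, if i = b then (ind (γ = δ) + ind (c a = δ)) else 0) := by
        rw [Finset.sum_add_distrib, Finset.sum_add_distrib]
    _ = 0 := by
        rw [hev δ hδ, Fintype.sum_eq_single a (fun x hx => if_neg hx),
          Fintype.sum_eq_single b (fun x hx => if_neg hx), if_pos rfl, if_pos rfl,
          zero_add, z2_self]

set_option maxHeartbeats 2000000 in
lemma acr_adj_flip (c : Fin n → Col) (a b : Fin n) (hab : (a : ℕ) + 1 = (b : ℕ))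
    (ha : c a = none) (hb : c b = none) (γ : Col) :
    acr (Function.update (Function.update c a γ) b γ) = acr c := by
  have hne_ab : a ≠ b := fun e => by rw [e] at hab; omega
  set s : Equiv.Perm (Fin n) := Equiv.swap a b with hs
  set c2 := Function.update (Function.update c a γ) b γ with hc2
  have hc2a : c2 a = γ := by rw [hc2, Function.update_of_ne hne_ab, Function.update_self]
  have hc2b : c2 b = γ := by rw [hc2, Function.update_self]
  have hc2o : ∀ x, x ≠ a → x ≠ b → c2 x = c x := fun x h1 h2 => by
    rw [hc2, Function.update_of_ne h2, Function.update_of_ne h1]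
  have hc2s : ∀ x, c2 (s x) = c2 x := by
    intro x
    rcases eq_or_ne x a with rfl | hxa
    · rw [hs, Equiv.swap_apply_left, hc2a, hc2b]
    · rcases eq_or_ne x b with rfl | hxb
      · rw [hs, Equiv.swap_apply_right, hc2a, hc2b]
      · rw [hs, Equiv.swap_apply_of_ne_of_ne hxa hxb]
  have hslots : ∀ (d : Fin n → Col) (q : Quad n), pat d q → ∀ x, inco x q → d x ≠ none := by
    intro d q hp x hx
    rcases hx with e | e | e | e <;> rw [← e]
    · exact hp.2.2.1
    · exact hp.2.2.2.2
    · exact fun h => hp.2.2.1 (hp.2.1.trans h)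
    · exact fun h => hp.2.2.2.2 (hp.2.2.2.1.trans h)
  have split4 : ∀ (d : Fin n → Col), acr d =
      (∑ q : Quad n, ind ((srt q ∧ pat d q) ∧ inco a q ∧ inco b q)) +
      (∑ q : Quad n, ind ((srt q ∧ pat d q) ∧ inco a q ∧ ¬ inco b q)) +
      (∑ q : Quad n, ind ((srt q ∧ pat d q) ∧ ¬ inco a q ∧ inco b q)) +
      (∑ q : Quad n, ind ((srt q ∧ pat d q) ∧ ¬ inco a q ∧ ¬ inco b q)) := by
    intro d
    rw [acr, ← Finset.sum_add_distrib, ← Finset.sum_add_distrib, ← Finset.sum_add_distrib]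
    exact Finset.sum_congr rfl fun q _ => ind_split4 _ _ _
  -- for c : any quadruple touching a or b dies
  have zc1 : (∑ q : Quad n, ind ((srt q ∧ pat c q) ∧ inco a q ∧ inco b q)) = 0 :=
    Finset.sum_eq_zero fun q _ => ind_false fun h => hslots c q h.1.2 a h.2.1 ha
  have zc2 : (∑ q : Quad n, ind ((srt q ∧ pat c q) ∧ inco a q ∧ ¬ inco b q)) = 0 :=
    Finset.sum_eq_zero fun q _ => ind_false fun h => hslots c q h.1.2 a h.2.1 ha
  have zc3 : (∑ q : Quad n, ind ((srt q ∧ pat c q) ∧ ¬ inco a q ∧ inco b q)) = 0 :=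
    Finset.sum_eq_zero fun q _ => ind_false fun h => hslots c q h.1.2 b h.2.2 hb
  -- for c2 : both part dies via consecutive-slot colors
  have zb : (∑ q : Quad n, ind ((srt q ∧ pat c2 q) ∧ inco a q ∧ inco b q)) = 0 := by
    refine Finset.sum_eq_zero fun q _ => ind_false fun h => ?_
    obtain ⟨⟨hsrt, hp⟩, hA, hB⟩ := h
    rcases (shape_decomp a b hab).mp ⟨hsrt, hA, hB⟩ with e | e | e
    · exact hp.1 (by rw [e.1, e.2.1, hc2a, hc2b])
    · exact hp.1 (by rw [e.1, hc2a, hp.2.1, e.2.1, hc2b])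
    · exact hp.1 (by rw [hp.2.1, e.1, hc2a, hp.2.2.2.1, e.2.1, hc2b])
  -- the two single parts cancel
  have hincoa : ∀ q : Quad n, inco a (eqv s q) ↔ inco b q := by
    intro q
    have h : ∀ x : Fin n, s x = a ↔ x = b := fun x => by
      constructor
      · intro h
        have := congrArg s h
        rwa [Equiv.swap_apply_self, Equiv.swap_apply_left] at this
      · intro e; rw [e]; exact Equiv.swap_apply_right a b
    simp only [inco, eqv_apply, h]
  have hincob : ∀ q : Quad n, inco b (eqv s q) ↔ inco a q := by
    intro q
    have h : ∀ x : Fin n, s x = b ↔ x = a := fun x => by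
      constructor
      · intro h
        have := congrArg s h
        rwa [Equiv.swap_apply_self, Equiv.swap_apply_right] at this
      · intro e; rw [e]; exact Equiv.swap_apply_left a b
    simp only [inco, eqv_apply, h]
  have hpatc2 : ∀ q : Quad n, pat c2 (eqv s q) ↔ pat c2 q := by
    intro q
    unfold pat
    rw [eqv_apply]
    simp only [hc2s]
  have hcan : (∑ q : Quad n, ind ((srt q ∧ pat c2 q) ∧ inco a q ∧ ¬ inco b q)) =
      ∑ q : Quad n, ind ((srt q ∧ pat c2 q) ∧ ¬ inco a q ∧ inco b q) := by
    rw [← Equiv.sum_comp (eqv s)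
      (fun q => ind ((srt q ∧ pat c2 q) ∧ inco a q ∧ ¬ inco b q))]
    refine Finset.sum_congr rfl fun q _ => ind_congr ?_
    rw [hincoa q, hincob q, hpatc2 q]
    constructor
    · rintro ⟨⟨h1, h2⟩, h3, h4⟩
      refine ⟨⟨(srt_eqv_swap a b hab fun hc => h4 hc.1).mp h1, h2⟩, h4, h3⟩
    · rintro ⟨⟨h1, h2⟩, h3, h4⟩
      refine ⟨⟨(srt_eqv_swap a b hab fun hc => h3 hc.1).mpr h1, h2⟩, h4, h3⟩
  -- neither parts agree
  have hneither : (∑ q : Quad n, ind ((srt q ∧ pat c2 q) ∧ ¬ inco a q ∧ ¬ inco b q)) =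
      ∑ q : Quad n, ind ((srt q ∧ pat c q) ∧ ¬ inco a q ∧ ¬ inco b q) := by
    refine Finset.sum_congr rfl fun q _ => ind_congr ?_
    constructor
    · rintro ⟨⟨h1, h2⟩, h3, h4⟩
      refine ⟨⟨h1, ?_⟩, h3, h4⟩
      have e1 : c2 q.1 = c q.1 := hc2o _ (fun e => h3 (Or.inl e)) (fun e => h4 (Or.inl e))
      have e2 : c2 q.2.1 = c q.2.1 :=
        hc2o _ (fun e => h3 (Or.inr (Or.inl e))) (fun e => h4 (Or.inr (Or.inl e)))
      have e3 : c2 q.2.2.1 = c q.2.2.1 :=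
        hc2o _ (fun e => h3 (Or.inr (Or.inr (Or.inl e))))
          (fun e => h4 (Or.inr (Or.inr (Or.inl e))))
      have e4 : c2 q.2.2.2 = c q.2.2.2 :=
        hc2o _ (fun e => h3 (Or.inr (Or.inr (Or.inr e))))
          (fun e => h4 (Or.inr (Or.inr (Or.inr e))))
      unfold pat at h2 ⊢
      rw [← e1, ← e2, ← e3, ← e4]
      exact h2
    · rintro ⟨⟨h1, h2⟩, h3, h4⟩
      refine ⟨⟨h1, ?_⟩, h3, h4⟩
      have e1 : c2 q.1 = c q.1 := hc2o _ (fun e => h3 (Or.inl e)) (fun e => h4 (Or.inl e))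
      have e2 : c2 q.2.1 = c q.2.1 :=
        hc2o _ (fun e => h3 (Or.inr (Or.inl e))) (fun e => h4 (Or.inr (Or.inl e)))
      have e3 : c2 q.2.2.1 = c q.2.2.1 :=
        hc2o _ (fun e => h3 (Or.inr (Or.inr (Or.inl e))))
          (fun e => h4 (Or.inr (Or.inr (Or.inl e))))
      have e4 : c2 q.2.2.2 = c q.2.2.2 :=
        hc2o _ (fun e => h3 (Or.inr (Or.inr (Or.inr e))))
          (fun e => h4 (Or.inr (Or.inr (Or.inr e))))
      unfold pat at h2 ⊢
      rw [e1, e2, e3, e4]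
      exact h2
  rw [split4 c2, split4 c, zc1, zc2, zc3, zb, hcan, hneither]
  exact z2_flip _ _


lemma acr_gen_flip (k : ℕ) : ∀ (c : Fin n → Col) (u v : Fin n) (γ : Col),
    (∀ δ : Col, δ ≠ none → ∑ i : Fin n, ind (c i = δ) = 0) →
    (v : ℕ) = (u : ℕ) + 1 + k → c u = none → c v = none →
    acr (Function.update (Function.update c u γ) v γ) =
      acr c + ∑ w ∈ Finset.univ.filter fun w : Fin n => u < w ∧ w < v, ww γ (c w) := by
  induction k with
  | zero =>
    intro c u v γ hev hv hu hv'
    have hset : (Finset.univ.filter fun w : Fin n => u < w ∧ w < v) = ∅ := by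
      apply Finset.filter_false_of_mem
      intro w _
      rw [Fin.lt_def, Fin.lt_def]
      omega
    rw [hset, Finset.sum_empty, add_zero, acr_adj_flip c u v (by omega) hu hv' γ]
  | succ k ih =>
    intro c u v γ hev hv hu hv'
    have hw0n : (u : ℕ) + 1 < n := by omega
    set w0 : Fin n := ⟨(u : ℕ) + 1, by omega⟩ with hw0def
    have huw0 : u ≠ w0 := by rw [Fin.ne_iff_vne]; simp [hw0def]
    have hvu : v ≠ u := by rw [Fin.ne_iff_vne]; omega
    have hvw : v ≠ w0 := by rw [Fin.ne_iff_vne]; simp [hw0def]; omega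
    set c1 : Fin n → Col := c ∘ Equiv.swap u w0 with hc1def
    have hc1u : c1 u = c w0 := by
      simp only [hc1def, Function.comp_apply, Equiv.swap_apply_left]
    have hc1w0 : c1 w0 = c u := by
      simp only [hc1def, Function.comp_apply, Equiv.swap_apply_right]
    have hc1v : c1 v = c v := by
      simp only [hc1def, Function.comp_apply, Equiv.swap_apply_of_ne_of_ne hvu hvw]
    have hc1o : ∀ x, x ≠ u → x ≠ w0 → c1 x = c x := fun x h1 h2 => by
      simp only [hc1def, Function.comp_apply, Equiv.swap_apply_of_ne_of_ne h1 h2]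
    -- swapping a ⊥ site is free
    have h1 : acr c1 = acr c := by
      rw [hc1def, acr_adj_swap c u w0 hev (by simp [hw0def]), hu, ww_none_left, add_zero]
    have hev1 : ∀ δ : Col, δ ≠ none → ∑ i : Fin n, ind (c1 i = δ) = 0 :=
      hev_comp c (Equiv.swap u w0) hev
    have h2 := ih c1 w0 v γ hev1 (by simp [hw0def]; omega) (hc1w0.trans hu) (hc1v.trans hv')
    set c2 : Fin n → Col := Function.update (Function.update c1 w0 γ) v γ with hc2def
    have hc2u : c2 u = c w0 := by
      rw [hc2def, Function.update_of_ne hvu.symm, Function.update_of_ne huw0, hc1u]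
    have hc2w0 : c2 w0 = γ := by
      rw [hc2def, Function.update_of_ne hvw.symm, Function.update_self]
    have hc2v : c2 v = γ := by rw [hc2def, Function.update_self]
    have hev2 : ∀ δ : Col, δ ≠ none → ∑ i : Fin n, ind (c2 i = δ) = 0 := by
      rw [hc2def]
      exact hev_update2 c1 w0 v hvw.symm ((hc1w0.trans hu).trans (hc1v.trans hv').symm) γ hev1
    have h3 : acr (c2 ∘ Equiv.swap u w0) = acr c2 + ww (c2 u) (c2 w0) :=
      acr_adj_swap c2 u w0 hev2 (by simp [hw0def])
    -- the final coloring is the target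
    have hfun : c2 ∘ Equiv.swap u w0 = Function.update (Function.update c u γ) v γ := by
      funext i
      rcases eq_or_ne i u with rfl | hiu
      · rw [Function.comp_apply, Equiv.swap_apply_left, hc2w0,
          Function.update_of_ne hvu.symm, Function.update_self]
      · rcases eq_or_ne i w0 with rfl | hiw0
        · rw [Function.comp_apply, Equiv.swap_apply_right, hc2u,
            Function.update_of_ne hvw.symm, Function.update_of_ne huw0.symm]
        · rw [Function.comp_apply, Equiv.swap_apply_of_ne_of_ne hiu hiw0]
          rcases eq_or_ne i v with rfl | hiv
          · rw [hc2v, Function.update_self]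
          · rw [hc2def, Function.update_of_ne hiv, Function.update_of_ne hiw0, hc1o i hiu hiw0,
              Function.update_of_ne hiv, Function.update_of_ne hiu]
    rw [← hfun, h3, h2, h1, hc2u, hc2w0]
    have hsum : (∑ w ∈ Finset.univ.filter fun w : Fin n => w0 < w ∧ w < v, ww γ (c1 w)) =
        ∑ w ∈ Finset.univ.filter fun w : Fin n => w0 < w ∧ w < v, ww γ (c w) := by
      refine Finset.sum_congr rfl fun w hw => ?_
      rw [Finset.mem_filter] at hw
      obtain ⟨-, hw1, hw2⟩ := hw
      have hwu : w ≠ u := by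
        rw [Fin.ne_iff_vne]
        have := Fin.lt_def.mp hw1
        simp only [hw0def] at this ⊢
        omega
      have hww0 : w ≠ w0 := Ne.symm (ne_of_lt hw1)
      rw [hc1o w hwu hww0]
    rw [hsum]
    have hset : (Finset.univ.filter fun w : Fin n => u < w ∧ w < v) =
        insert w0 (Finset.univ.filter fun w : Fin n => w0 < w ∧ w < v) := by
      ext w
      simp only [Finset.mem_insert, Finset.mem_filter, Finset.mem_univ, true_and,
        Fin.lt_def, Fin.ext_iff, hw0def]
      omega
    have hnotmem : w0 ∉ (Finset.univ.filter fun w : Fin n => w0 < w ∧ w < v) := by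
      simp [Finset.mem_filter]
    rw [hset, Finset.sum_insert hnotmem, ww_symm (c w0) γ]
    ring

end CRaux


section Transfer
open CRaux

variable {n : ℕ}

/-- a bit as an element of `ZMod 2` -/
def eps (t : Fin 2) : ZMod 2 := if t = 1 then 1 else 0

lemma eps_add : ∀ s t : Fin 2, eps (s + t) = eps s + eps t := by decide
lemma eps_cast : ∀ t : Fin 2, ((t : ℕ) : ZMod 2) = eps t := by decide

/-- `eps` as an additive monoid hom -/
def epsHom : Fin 2 →+ ZMod 2 where
  toFun := eps
  map_zero' := by decide
  map_add' := eps_add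

/-- the `s`-invariant of a site -/
def sS (x : Fin (2*2) → Fin n → Fin 2) (i : Fin n) : ZMod 2 :=
  eps (x ⟨0, by omega⟩ i) + eps (x ⟨1, by omega⟩ i)

/-- the `d`-invariant of a site -/
def dD (x : Fin (2*2) → Fin n → Fin 2) (i : Fin n) : ZMod 2 :=
  eps (x ⟨0, by omega⟩ i) + eps (x ⟨2, by omega⟩ i)

/-- colors from the Klein group -/
def colorOf (p : ZMod 2 × ZMod 2) : Col :=
  if p.1.val = 0 then (if p.2.val = 0 then none else some 0)
  else (if p.2.val = 0 then some 1 else some 2)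

lemma ww_colorOf : ∀ p q : ZMod 2 × ZMod 2,
    ww (colorOf p) (colorOf q) = p.1 * q.2 + p.2 * q.1 := by decide

variable (x : Fin (2*2) → Fin n → Fin 2) (i : Fin n)

/-- per-site classification of paired sites -/
lemma sc_spec (hi : (∃ a b, siteIsI x i a b) ∨ (∃ a b, siteIsX x i a b)) :
    siteColor x i = colorOf (sS x i, dD x i) ∧
      eps (x ⟨3, by omega⟩ i) =
        eps (x ⟨0, by omega⟩ i) + eps (x ⟨1, by omega⟩ i) + eps (x ⟨2, by omega⟩ i) := by
  rcases hi with ⟨a, b, h⟩ | ⟨a, b, h⟩ <;> fin_cases a <;> fin_cases b <;>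
  · obtain ⟨h0, h1, h2, h3⟩ := h
    simp only [Fin.isValue, show ((⟨0, by omega⟩ : Fin (2*2)) = 0) from rfl,
      show ((⟨1, by omega⟩ : Fin (2*2)) = 1) from rfl,
      show ((⟨2, by omega⟩ : Fin (2*2)) = 2) from rfl,
      show ((⟨3, by omega⟩ : Fin (2*2)) = 3) from rfl] at h0 h1 h2 h3 ⊢
    constructor
    · simp +decide [siteColor, siteIsI, siteIsX, h0, h1, h2, h3, sS, dD, colorOf, eps]
    · simp +decide [h0, h1, h2, h3, eps]

end Transfer



section Transfer2
open CRaux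

variable {n : ℕ} (x : Fin (2*2) → Fin n → Fin 2) (i : Fin n)

lemma fin2_ne_succ : ∀ t : Fin 2, t ≠ t + 1 := by decide

lemma I_ne_X (a b a' b' : Fin 2) (hI : siteIsI x i a b) : ¬ siteIsX x i a' b' := by
  intro hX
  have e0 : a = a' := hI.1.symm.trans hX.1
  have e1 : a = a' + 1 := hI.2.1.symm.trans hX.2.1
  rw [← e0] at e1
  exact fin2_ne_succ a e1

lemma sc0_iff : siteColor x i = some 0 ↔ (siteIsI x i 0 1 ∨ siteIsI x i 1 0) := by
  unfold siteColor
  split_ifs with h1 h2 h3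
  · simp [h1]
  · exact iff_of_false (by decide) h1
  · exact iff_of_false (by decide) h1
  · exact iff_of_false (by decide) h1

lemma sc1_iff : siteColor x i = some 1 ↔ (siteIsX x i 0 0 ∨ siteIsX x i 1 1) := by
  unfold siteColor
  split_ifs with h1 h2 h3
  · refine iff_of_false (by decide) ?_
    rintro (hX | hX) <;> rcases h1 with hI | hI <;> exact I_ne_X x i _ _ _ _ hI hX
  · simp [h2]
  · exact iff_of_false (by decide) h2
  · exact iff_of_false (by decide) h2

lemma sc2_iff : siteColor x i = some 2 ↔ (siteIsX x i 0 1 ∨ siteIsX x i 1 0) := by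
  unfold siteColor
  split_ifs with h1 h2 h3
  · refine iff_of_false (by decide) ?_
    rintro (hX | hX) <;> rcases h1 with hI | hI <;> exact I_ne_X x i _ _ _ _ hI hX
  · refine iff_of_false (by decide) ?_
    rintro (hX | hX) <;> rcases h2 with hX' | hX' <;>
      · have e0 := hX.1.symm.trans hX'.1
        have e2 := hX.2.2.1.symm.trans hX'.2.2.1
        revert e0 e2
        decide
  · simp [h3]
  · exact iff_of_false (by decide) h3

lemma sc_I00 (h : siteIsI x i 0 0) : siteColor x i = none := by
  obtain ⟨h0, h1, h2, h3⟩ := h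
  simp only [Fin.isValue, show ((⟨0, by omega⟩ : Fin (2*2)) = 0) from rfl,
    show ((⟨1, by omega⟩ : Fin (2*2)) = 1) from rfl,
    show ((⟨2, by omega⟩ : Fin (2*2)) = 2) from rfl,
    show ((⟨3, by omega⟩ : Fin (2*2)) = 3) from rfl] at h0 h1 h2 h3
  simp +decide [siteColor, siteIsI, siteIsX, h0, h1, h2, h3]

lemma sc_I11 (h : siteIsI x i 1 1) : siteColor x i = none := by
  obtain ⟨h0, h1, h2, h3⟩ := h
  simp only [Fin.isValue, show ((⟨0, by omega⟩ : Fin (2*2)) = 0) from rfl,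
    show ((⟨1, by omega⟩ : Fin (2*2)) = 1) from rfl,
    show ((⟨2, by omega⟩ : Fin (2*2)) = 2) from rfl,
    show ((⟨3, by omega⟩ : Fin (2*2)) = 3) from rfl] at h0 h1 h2 h3
  simp +decide [siteColor, siteIsI, siteIsX, h0, h1, h2, h3]

lemma sum_univ_four' (f : Fin (2*2) → ZMod 2) :
    ∑ j : Fin (2*2), f j =
      f ⟨0, by omega⟩ + f ⟨1, by omega⟩ + f ⟨2, by omega⟩ + f ⟨3, by omega⟩ :=
  Fin.sum_univ_four f

lemma cnt_cast (P : Fin n → Prop) :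
    (((Finset.univ.filter P).card : ℕ) : ZMod 2) = ∑ i : Fin n, ind (P i) := by
  rw [Finset.card_filter, Nat.cast_sum]
  refine Finset.sum_congr rfl fun i _ => ?_
  by_cases h : P i
  · rw [if_pos h, ind_true h, Nat.cast_one]
  · rw [if_neg h, ind_false h, Nat.cast_zero]

lemma even_classes (η : ℕ) (hx : pairedState η x) :
    ∀ γ : Col, γ ≠ none → ∑ j : Fin n, ind (siteColor x j = γ) = 0 := by
  intro γ hγ
  obtain ⟨hall, hR, hG, hB, -⟩ := hx
  have key : ∀ (A B : Fin n → Prop), (∀ j, ¬ (A j ∧ B j)) →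
      (Finset.univ.filter A).card = (Finset.univ.filter B).card →
      ∀ (e : ∀ j : Fin n, siteColor x j = γ ↔ (A j ∨ B j)),
      ∑ j : Fin n, ind (siteColor x j = γ) = 0 := by
    intro A B hAB hcard e
    have : ∀ j, ind (siteColor x j = γ) = ind (A j) + ind (B j) := by
      intro j
      rw [ind_congr (e j)]
      by_cases hA : A j <;> by_cases hB : B j
      · exact absurd ⟨hA, hB⟩ (hAB j)
      · simp [ind, hA, hB]
      · simp [ind, hA, hB]
      · simp [ind, hA, hB]
    rw [Finset.sum_congr rfl fun j _ => this j, Finset.sum_add_distrib,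
      ← cnt_cast, ← cnt_cast, hcard, z2_self]
  match γ, hγ with
  | some 0, _ =>
    refine key _ _ (fun j ⟨h1, h2⟩ => by
        have := h1.1.symm.trans h2.1
        revert this; decide)
      ?_ (fun j => sc0_iff x j)
    exact hR
  | some 1, _ =>
    refine key _ _ (fun j ⟨h1, h2⟩ => by
        have := h1.1.symm.trans h2.1
        revert this; decide)
      ?_ (fun j => sc1_iff x j)
    exact hG
  | some 2, _ =>
    refine key _ _ (fun j ⟨h1, h2⟩ => by
        have := h1.1.symm.trans h2.1
        revert this; decide)
      ?_ (fun j => sc2_iff x j)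
    exact hB

lemma crossNum_cast : ((crossNum x : ℕ) : ZMod 2) = acr (siteColor x) := by
  rw [crossNum, Finset.card_filter, Nat.cast_sum, acr]
  refine Finset.sum_congr rfl fun q _ => ?_
  by_cases h : q.1 < q.2.1 ∧ q.2.1 < q.2.2.1 ∧ q.2.2.1 < q.2.2.2 ∧
      siteColor x q.1 ≠ siteColor x q.2.1 ∧
      siteColor x q.1 = siteColor x q.2.2.1 ∧ siteColor x q.1 ≠ none ∧
      siteColor x q.2.1 = siteColor x q.2.2.2 ∧ siteColor x q.2.1 ≠ none
  · rw [if_pos h, ind_true ⟨⟨h.1, h.2.1, h.2.2.1⟩, h.2.2.2⟩, Nat.cast_one]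
  · rw [if_neg h, ind_false (fun ⟨h1, h2⟩ => h ⟨h1.1, h1.2.1, h1.2.2, h2⟩), Nat.cast_zero]

lemma siteColor_swap (u v : Fin n) :
    siteColor (swapSites u v x) = (siteColor x) ∘ (Equiv.swap u v) := rfl

end Transfer2



section Transfer3
open CRaux

variable {n : ℕ} (x : Fin (2*2) → Fin n → Fin 2)

lemma siteColor_congr (y : Fin (2*2) → Fin n → Fin 2) (i : Fin n)
    (h : ∀ j, y j i = x j i) : siteColor y i = siteColor x i := by
  have e1 : ∀ a b, siteIsI y i a b ↔ siteIsI x i a b := fun a b => by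
    unfold siteIsI; rw [h, h, h, h]
  have e2 : ∀ a b, siteIsX y i a b ↔ siteIsX x i a b := fun a b => by
    unfold siteIsX; rw [h, h, h, h]
  unfold siteColor
  exact if_congr (or_congr (e1 0 1) (e1 1 0)) rfl
    (if_congr (or_congr (e2 0 0) (e2 1 1)) rfl
      (if_congr (or_congr (e2 0 1) (e2 1 0)) rfl rfl))

lemma flip_color_gen (u v : Fin n) (huv : u ≠ v) (W : Finset (Fin (2*2))) (γ : Option (Fin 3))
    (hcu : siteColor (flipSites u v W x) u = γ) (hcv : siteColor (flipSites u v W x) v = γ) :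
    siteColor (flipSites u v W x) =
      Function.update (Function.update (siteColor x) u γ) v γ := by
  funext i
  rcases eq_or_ne i u with rfl | hiu
  · rw [hcu, Function.update_of_ne huv, Function.update_self]
  · rcases eq_or_ne i v with rfl | hiv
    · rw [hcv, Function.update_self]
    · rw [Function.update_of_ne hiv, Function.update_of_ne hiu]
      exact siteColor_congr x _ i (fun j => by simp [flipSites, hiu, hiv])

lemma flip_color12 (u v : Fin n) (huv : u ≠ v)
    (hu : siteIsI x u 0 0) (hv : siteIsI x v 1 1) :
    siteColor (flipSites u v ({⟨0, by omega⟩, ⟨1, by omega⟩} : Finset (Fin (2*2))) x) =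
      Function.update (Function.update (siteColor x) u (some 0)) v (some 0) := by
  obtain ⟨hu0, hu1, hu2, hu3⟩ := hu
  obtain ⟨hv0, hv1, hv2, hv3⟩ := hv
  simp only [Fin.isValue, show ((⟨0, by omega⟩ : Fin (2*2)) = 0) from rfl,
    show ((⟨1, by omega⟩ : Fin (2*2)) = 1) from rfl,
    show ((⟨2, by omega⟩ : Fin (2*2)) = 2) from rfl,
    show ((⟨3, by omega⟩ : Fin (2*2)) = 3) from rfl] at hu0 hu1 hu2 hu3 hv0 hv1 hv2 hv3
  refine flip_color_gen x u v huv _ _ ?_ ?_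
  · refine (sc0_iff _ u).mpr (Or.inr ⟨?_, ?_, ?_, ?_⟩) <;>
      simp +decide [flipSites, hu0, hu1, hu2, hu3]
  · refine (sc0_iff _ v).mpr (Or.inl ⟨?_, ?_, ?_, ?_⟩) <;>
      simp +decide [flipSites, hv0, hv1, hv2, hv3]

lemma flip_color13 (u v : Fin n) (huv : u ≠ v)
    (hu : siteIsI x u 0 0) (hv : siteIsI x v 1 1) :
    siteColor (flipSites u v ({⟨0, by omega⟩, ⟨2, by omega⟩} : Finset (Fin (2*2))) x) =
      Function.update (Function.update (siteColor x) u (some 1)) v (some 1) := by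
  obtain ⟨hu0, hu1, hu2, hu3⟩ := hu
  obtain ⟨hv0, hv1, hv2, hv3⟩ := hv
  simp only [Fin.isValue, show ((⟨0, by omega⟩ : Fin (2*2)) = 0) from rfl,
    show ((⟨1, by omega⟩ : Fin (2*2)) = 1) from rfl,
    show ((⟨2, by omega⟩ : Fin (2*2)) = 2) from rfl,
    show ((⟨3, by omega⟩ : Fin (2*2)) = 3) from rfl] at hu0 hu1 hu2 hu3 hv0 hv1 hv2 hv3
  refine flip_color_gen x u v huv _ _ ?_ ?_
  · refine (sc1_iff _ u).mpr (Or.inr ⟨?_, ?_, ?_, ?_⟩) <;>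
      simp +decide [flipSites, hu0, hu1, hu2, hu3]
  · refine (sc1_iff _ v).mpr (Or.inl ⟨?_, ?_, ?_, ?_⟩) <;>
      simp +decide [flipSites, hv0, hv1, hv2, hv3]

lemma flip_color23 (u v : Fin n) (huv : u ≠ v)
    (hu : siteIsI x u 0 0) (hv : siteIsI x v 1 1) :
    siteColor (flipSites u v ({⟨1, by omega⟩, ⟨2, by omega⟩} : Finset (Fin (2*2))) x) =
      Function.update (Function.update (siteColor x) u (some 2)) v (some 2) := by
  obtain ⟨hu0, hu1, hu2, hu3⟩ := hu
  obtain ⟨hv0, hv1, hv2, hv3⟩ := hv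
  simp only [Fin.isValue, show ((⟨0, by omega⟩ : Fin (2*2)) = 0) from rfl,
    show ((⟨1, by omega⟩ : Fin (2*2)) = 1) from rfl,
    show ((⟨2, by omega⟩ : Fin (2*2)) = 2) from rfl,
    show ((⟨3, by omega⟩ : Fin (2*2)) = 3) from rfl] at hu0 hu1 hu2 hu3 hv0 hv1 hv2 hv3
  refine flip_color_gen x u v huv _ _ ?_ ?_
  · refine (sc2_iff _ u).mpr (Or.inl ⟨?_, ?_, ?_, ?_⟩) <;>
      simp +decide [flipSites, hu0, hu1, hu2, hu3]
  · refine (sc2_iff _ v).mpr (Or.inr ⟨?_, ?_, ?_, ?_⟩) <;>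
      simp +decide [flipSites, hv0, hv1, hv2, hv3]

end Transfer3



section FinalAux
open CRaux

lemma dot_master : ∀ a0 a1 a2 b0 b1 b2 z0 z1 z2 : ZMod 2,
    (a0+z0)*(b0+z0) + (a1+z1)*(b1+z1) + (a2+z2)*(b2+z2) +
      ((a0+a1+a2)+(z0+z1+z2))*((b0+b1+b2)+(z0+z1+z2)) =
    ((a0+a1) + (z0+z1)) * ((b0+b2) + (z0+z2)) + ((a0+a2) + (z0+z2)) * ((b0+b1) + (z0+z1)) := by
  decide

lemma final1 : ∀ A su du sv dv S D : ZMod 2,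
    (A + (((su+sv)*D + (du+dv)*S) + (su*dv + du*sv))) + A =
      (su+S)*(dv+D) + (du+D)*(sv+S) := by decide

lemma final2 : ∀ A p q : ZMod 2, A = p + q + (A + (p + q)) := by decide

lemma final3 : ∀ A p q r : ZMod 2, A = q + r + (A + ((p+q)+(p+r))) := by decide

end FinalAux


/-- Properties of the crossing number of paired states under site
swaps and bit flips (congruences mod 2). -/
theorem crossing_number_properties
    (n η : ℕ) (hη : η ≤ n)
    (x : Fin (2*2) → Fin n → Fin 2) (hx : pairedState η x)
    (u v : Fin n) (huv : u < v) :
    ((crossNum (swapSites u v x) : ZMod 2) - (crossNum x : ZMod 2) =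
      (bitDot (fun j => x j u + zIoo u v x j) (fun j => x j v + zIoo u v x j) : ZMod 2)) ∧
    (siteIsI x u 0 0 → siteIsI x v 1 1 →
      ((crossNum x : ZMod 2) =
        ((zIoo u v x ⟨0, by omega⟩ : ℕ) : ZMod 2) +
          ((zIoo u v x ⟨1, by omega⟩ : ℕ) : ZMod 2) +
          (crossNum (flipSites u v {⟨0, by omega⟩, ⟨1, by omega⟩} x) : ZMod 2) ∧
       (crossNum x : ZMod 2) =
        ((zIoo u v x ⟨0, by omega⟩ : ℕ) : ZMod 2) +
          ((zIoo u v x ⟨2, by omega⟩ : ℕ) : ZMod 2) +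
          (crossNum (flipSites u v {⟨0, by omega⟩, ⟨2, by omega⟩} x) : ZMod 2) ∧
       (crossNum x : ZMod 2) =
        ((zIoo u v x ⟨1, by omega⟩ : ℕ) : ZMod 2) +
          ((zIoo u v x ⟨2, by omega⟩ : ℕ) : ZMod 2) +
          (crossNum (flipSites u v {⟨1, by omega⟩, ⟨2, by omega⟩} x) : ZMod 2))) := by
  have hall := hx.1
  have hev := even_classes x η hx
  have hvu : (u : ℕ) < (v : ℕ) := Fin.lt_def.mp huv
  have hne : u ≠ v := ne_of_lt huv
  have hwwt : ∀ i j : Fin n, CRaux.ww (siteColor x i) (siteColor x j) =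
      sS x i * dD x j + dD x i * sS x j := fun i j => by
    rw [(sc_spec x i (hall i)).1, (sc_spec x j (hall j)).1, ww_colorOf]
  have hez : ∀ j : Fin (2*2), eps (zIoo u v x j) =
      ∑ w ∈ Finset.univ.filter (fun w : Fin n => u < w ∧ w < v), eps (x j w) := fun j =>
    map_sum epsHom (fun w => x j w) _
  have rS : (∑ w ∈ Finset.univ.filter (fun w : Fin n => u < w ∧ w < v), sS x w) =
      eps (zIoo u v x ⟨0, by omega⟩) + eps (zIoo u v x ⟨1, by omega⟩) := by
    rw [hez, hez, ← Finset.sum_add_distrib]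
    exact Finset.sum_congr rfl fun w _ => rfl
  have rD : (∑ w ∈ Finset.univ.filter (fun w : Fin n => u < w ∧ w < v), dD x w) =
      eps (zIoo u v x ⟨0, by omega⟩) + eps (zIoo u v x ⟨2, by omega⟩) := by
    rw [hez, hez, ← Finset.sum_add_distrib]
    exact Finset.sum_congr rfl fun w _ => rfl
  have rz : eps (zIoo u v x ⟨3, by omega⟩) =
      eps (zIoo u v x ⟨0, by omega⟩) + eps (zIoo u v x ⟨1, by omega⟩) +
        eps (zIoo u v x ⟨2, by omega⟩) := by
    rw [hez, hez, hez, hez, ← Finset.sum_add_distrib, ← Finset.sum_add_distrib]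
    exact Finset.sum_congr rfl fun w _ => (sc_spec x w (hall w)).2
  constructor
  · -- part (i)
    rw [crossNum_cast, crossNum_cast, siteColor_swap, CRaux.z2_sub]
    rw [CRaux.acr_gen_swap ((v : ℕ) - (u : ℕ) - 1) (siteColor x) u v hev (by omega)]
    have hS : (∑ w ∈ Finset.univ.filter (fun w : Fin n => u < w ∧ w < v),
        (CRaux.ww (siteColor x u) (siteColor x w) +
          CRaux.ww (siteColor x v) (siteColor x w))) =
        (sS x u + sS x v) *
            (∑ w ∈ Finset.univ.filter (fun w : Fin n => u < w ∧ w < v), dD x w) +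
          (dD x u + dD x v) *
            (∑ w ∈ Finset.univ.filter (fun w : Fin n => u < w ∧ w < v), sS x w) := by
      rw [Finset.mul_sum, Finset.mul_sum, ← Finset.sum_add_distrib]
      refine Finset.sum_congr rfl fun w _ => ?_
      rw [hwwt u w, hwwt v w]
      ring
    have hbd : ((bitDot (fun j => x j u + zIoo u v x j)
        (fun j => x j v + zIoo u v x j) : ℕ) : ZMod 2) =
        (sS x u + (eps (zIoo u v x ⟨0, by omega⟩) + eps (zIoo u v x ⟨1, by omega⟩))) *
            (dD x v + (eps (zIoo u v x ⟨0, by omega⟩) + eps (zIoo u v x ⟨2, by omega⟩))) +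
          (dD x u + (eps (zIoo u v x ⟨0, by omega⟩) + eps (zIoo u v x ⟨2, by omega⟩))) *
            (sS x v + (eps (zIoo u v x ⟨0, by omega⟩) + eps (zIoo u v x ⟨1, by omega⟩))) := by
      rw [bitDot, Nat.cast_sum]
      rw [show (∑ j : Fin (2*2), ((((x j u + zIoo u v x j : Fin 2) : ℕ) *
            ((x j v + zIoo u v x j : Fin 2) : ℕ) : ℕ) : ZMod 2)) =
          ∑ j : Fin (2*2), (eps (x j u) + eps (zIoo u v x j)) *
            (eps (x j v) + eps (zIoo u v x j)) from
        Finset.sum_congr rfl fun j _ => by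
          rw [Nat.cast_mul, eps_cast, eps_cast, eps_add, eps_add]]
      rw [sum_univ_four' (fun j => (eps (x j u) + eps (zIoo u v x j)) *
        (eps (x j v) + eps (zIoo u v x j)))]
      rw [(sc_spec x u (hall u)).2, (sc_spec x v (hall v)).2, rz]
      simp only [sS, dD]
      exact dot_master _ _ _ _ _ _ _ _ _
    rw [hS, hwwt u v, rS, rD, hbd]
    exact final1 _ _ _ _ _ _ _
  · -- part (ii)
    intro hI00 hI11
    have hcu := sc_I00 x u hI00
    have hcv := sc_I11 x v hI11
    refine ⟨?_, ?_, ?_⟩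
    · have h1 := CRaux.acr_gen_flip ((v : ℕ) - (u : ℕ) - 1) (siteColor x) u v (some 0) hev
        (by omega) hcu hcv
      have h2 : (∑ w ∈ Finset.univ.filter (fun w : Fin n => u < w ∧ w < v),
          CRaux.ww (some 0) (siteColor x w)) =
          ∑ w ∈ Finset.univ.filter (fun w : Fin n => u < w ∧ w < v), sS x w := by
        refine Finset.sum_congr rfl fun w _ => ?_
        rw [(sc_spec x w (hall w)).1,
          show (some 0 : CRaux.Col) = colorOf (0, 1) from by decide, ww_colorOf]
        simp
      rw [crossNum_cast, crossNum_cast, flip_color12 x u v hne hI00 hI11, h1, h2, rS,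
        eps_cast, eps_cast]
      exact final2 _ _ _
    · have h1 := CRaux.acr_gen_flip ((v : ℕ) - (u : ℕ) - 1) (siteColor x) u v (some 1) hev
        (by omega) hcu hcv
      have h2 : (∑ w ∈ Finset.univ.filter (fun w : Fin n => u < w ∧ w < v),
          CRaux.ww (some 1) (siteColor x w)) =
          ∑ w ∈ Finset.univ.filter (fun w : Fin n => u < w ∧ w < v), dD x w := by
        refine Finset.sum_congr rfl fun w _ => ?_
        rw [(sc_spec x w (hall w)).1,
          show (some 1 : CRaux.Col) = colorOf (1, 0) from by decide, ww_colorOf]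
        simp
      rw [crossNum_cast, crossNum_cast, flip_color13 x u v hne hI00 hI11, h1, h2, rD,
        eps_cast, eps_cast]
      exact final2 _ _ _
    · have h1 := CRaux.acr_gen_flip ((v : ℕ) - (u : ℕ) - 1) (siteColor x) u v (some 2) hev
        (by omega) hcu hcv
      have h2 : (∑ w ∈ Finset.univ.filter (fun w : Fin n => u < w ∧ w < v),
          CRaux.ww (some 2) (siteColor x w)) =
          ∑ w ∈ Finset.univ.filter (fun w : Fin n => u < w ∧ w < v), (sS x w + dD x w) := by
        refine Finset.sum_congr rfl fun w _ => ?_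
        rw [(sc_spec x w (hall w)).1,
          show (some 2 : CRaux.Col) = colorOf (1, 1) from by decide, ww_colorOf]
        simp [add_comm]
      rw [crossNum_cast, crossNum_cast, flip_color23 x u v hne hI00 hI11, h1, h2,
        Finset.sum_add_distrib, rS, rD, eps_cast, eps_cast]
      exact final3 _ _ _ _

end DUCC
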